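/- arXiv:2209.11075 — 8 statements merged into one kernel-verified Lean document; each statement's English description precedes it below -/
import Mathlib

section
/- Let b be a positive integer, let α ∈ S_b^{-1}ℤ, and let a be any integer satisfying a·b ≡ 1 (mod d(α)), where d(α) is the reduced positive denominator of α. Then the generalized Dwork map satisfies D_b(α) = a·α + ⌊(α−1)/b − a·α⌋ + 1. In particular D_b(α) ∈ (1/d(α))·ℤ. -/
open Polynomial
open scoped Classical

noncomputable section

/-- The generalized Dwork map `D_b(α)`: the unique rational whose reduced denominator is
coprime to `b` and such that `b·D_b(α) − α ∈ {0, 1, …, b−1}`. -/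
def dwork (b : ℕ) (α : ℚ) : ℚ :=
  if h : ∃ θ : ℚ, Nat.Coprime θ.den b ∧ ∃ k : ℤ, 0 ≤ k ∧ k < (b : ℤ) ∧ (b : ℚ) * θ - α = (k : ℚ)
  then h.choose else 0

/-- `α ∈ ℤ_{≤0}`. -/
def IsNonPosInt (α : ℚ) : Prop := ∃ m : ℤ, m ≤ 0 ∧ α = (m : ℚ)

/-- `α ∈ ℤ_{>0}`. -/
def IsPosInt (α : ℚ) : Prop := ∃ m : ℤ, 0 < m ∧ α = (m : ℚ)

/-- `𝔫_α`. -/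
def frakn (α : ℚ) : ℤ := if 0 ≤ α then α.num else |α.num| + 1

/-- `⟨x⟩`: the fractional part of `x` if `x ∉ ℤ`, and `1` if `x ∈ ℤ`. -/
def cangle (x : ℝ) : ℝ := if ∃ m : ℤ, x = (m : ℝ) then 1 else Int.fract x

/-- Christol order `x ⪯ y`. -/
def cle (x y : ℝ) : Prop := cangle x < cangle y ∨ (cangle x = cangle y ∧ y ≤ x)

/-- The step function `δ_b(r, s, ·)`. -/
def qdelta (b : ℕ) (r s : ℤ) (x : ℝ) : ℤ :=
  if Int.gcd (s / (Nat.gcd (Int.gcd r s) b : ℤ)) (((b / Nat.gcd (Int.gcd r s) b : ℕ)) : ℤ) = 1 then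
    ⌊(Nat.gcd (Int.gcd r s) b : ℝ) * x
        - ((dwork (b / Nat.gcd (Int.gcd r s) b) ((r : ℚ) / (s : ℚ)) : ℚ) : ℝ)
        - ((⌊1 - (r : ℚ) / (s : ℚ)⌋ : ℤ) : ℝ) / ((b / Nat.gcd (Int.gcd r s) b : ℕ) : ℝ)⌋ + 1
  else 0

/-- The Landau-type step function `Δ_b^{𝐫,𝐭}`. -/
def qDeltaFn {v w : ℕ} (b : ℕ) (rr : Fin v → ℤ × ℤ) (tt : Fin w → ℤ × ℤ) (x : ℝ) : ℤ :=
  (∑ i, qdelta b (rr i).1 (rr i).2 x) - (∑ j, qdelta b (tt j).1 (tt j).2 x)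

/-- The q-Pochhammer symbol `(q^r; q^s)_n` for `n ∈ ℕ`, inside `ℚ(q)`. -/
def qPoch (r s : ℤ) (n : ℕ) : RatFunc ℚ :=
  ∏ i ∈ Finset.range n, (1 - RatFunc.X ^ (r + s * (i : ℤ)))

/-- The q-Pochhammer symbol `(q^r; q^s)_n` for `n ∈ ℤ`. -/
def qPochZ (r s : ℤ) (n : ℤ) : RatFunc ℚ :=
  if 0 ≤ n then qPoch r s n.toNat else (qPoch (r - s) (-s) (-n).toNat)⁻¹

/-- Multiplicity of `p` in `g`: the largest `k` with `p^k ∣ g`. -/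
def polyMult (p g : Polynomial ℚ) : ℕ := sSup {k : ℕ | p ^ k ∣ g}

/-- The valuation `v_{φ_b}` on `ℚ(q)` attached to the `b`-th cyclotomic polynomial. -/
def cycVal (b : ℕ) (f : RatFunc ℚ) : ℤ :=
  (polyMult (cyclotomic b ℚ) f.num : ℤ) - (polyMult (cyclotomic b ℚ) f.denom : ℤ)

/-- The image of an integer polynomial in `ℚ(q)`. -/
def polyZ (g : Polynomial ℤ) : RatFunc ℚ :=
  algebraMap (Polynomial ℚ) (RatFunc ℚ) (g.map (Int.castRingHom ℚ))

/-- `f ∈ ℤ[q⁻¹, q]`. -/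
def IsIntLaurent (f : RatFunc ℚ) : Prop :=
  ∃ (m : ℕ) (g : Polynomial ℤ), f * RatFunc.X ^ m = polyZ g

/-- `f ∈ ℤ[q]`. -/
def IsIntPoly (f : RatFunc ℚ) : Prop := ∃ g : Polynomial ℤ, f = polyZ g

/-- The ratio attached to a pair of integers. -/
def ratOf (p : ℤ × ℤ) : ℚ := (p.1 : ℚ) / (p.2 : ℚ)

/-- The q-hypergeometric term `Q_{𝐫,𝐭}(q; n)`, `n ∈ ℕ`. -/
def qHyp {v w : ℕ} (rr : Fin v → ℤ × ℤ) (tt : Fin w → ℤ × ℤ) (n : ℕ) : RatFunc ℚ :=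
  (∏ i, qPoch (rr i).1 (rr i).2 n) / (∏ j, qPoch (tt j).1 (tt j).2 n)

/-- The q-hypergeometric term `Q_{𝐫,𝐭}(q; n)`, `n ∈ ℤ`. -/
def qHypZ {v w : ℕ} (rr : Fin v → ℤ × ℤ) (tt : Fin w → ℤ × ℤ) (n : ℤ) : RatFunc ℚ :=
  (∏ i, qPochZ (rr i).1 (rr i).2 n) / (∏ j, qPochZ (tt j).1 (tt j).2 n)

/-- `c := gcd(r, s, b)`. -/
def cOf (p : ℤ × ℤ) (b : ℕ) : ℕ := Nat.gcd (Int.gcd p.1 p.2) b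

/-- Membership in `V_b` (resp. `W_b`): `gcd(s, b) = gcd(r, s, b)`. -/
def inV (p : ℤ × ℤ) (b : ℕ) : Prop := Nat.gcd p.2.natAbs b = cOf p b

/-- `d_{𝐫,𝐭}`: the lcm of all the `s_i` and `u_j`. -/
def dRT {v w : ℕ} (rr : Fin v → ℤ × ℤ) (tt : Fin w → ℤ × ℤ) : ℕ :=
  Nat.lcm (Finset.univ.lcm fun i => ((rr i).2).natAbs)
    (Finset.univ.lcm fun j => ((tt j).2).natAbs)

/-- `b̃`: the greatest divisor of `b` coprime to `d`. -/
def btilde (d b : ℕ) : ℕ := Nat.findGreatest (fun k => k ∣ b ∧ Nat.Coprime k d) b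

/-- The unique `a ∈ {1,…,d}` with `a·b̃ ≡ 1 (mod d)`. -/
def aOf (d b : ℕ) : ℕ :=
  if h : ∃ a, 1 ≤ a ∧ a ≤ d ∧ (a * btilde d b) % d = 1 % d then h.choose else 1

/-- The representative of `b` modulo `d` lying in `{1,…,d}`. -/
def repMod (d b : ℕ) : ℕ := if b % d = 0 then d else b % d

/-- The jump abscissa `(⟨e·α⟩ + k)/c − ⌊1 − a·α⌋`. -/
def jumpPt (p : ℤ × ℤ) (b : ℕ) (a ei : ℤ) (k : ℕ) : ℝ :=
  (cangle (((ei : ℚ) * ratOf p : ℚ) : ℝ) + (k : ℝ)) / (cOf p b : ℝ)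
    - ((⌊1 - (a : ℚ) * ratOf p⌋ : ℤ) : ℝ)

/-- Number of pairs `(i,k)` with jump abscissa `⪯ x` coming from one pair `p`. -/
def XiCount (p : ℤ × ℤ) (b : ℕ) (a ei : ℤ) (x : ℝ) : ℕ :=
  if inV p b then ((Finset.range (cOf p b)).filter fun k => cle (jumpPt p b a ei k) x).card else 0

/-- The generalized Christol step function `Ξ_{𝐫,𝐭}(b, ·)`, relative to choices `e`, `f`. -/
def Xi {v w : ℕ} (rr : Fin v → ℤ × ℤ) (tt : Fin w → ℤ × ℤ) (b : ℕ)
    (e : Fin v → ℤ) (f : Fin w → ℤ) (x : ℝ) : ℤ :=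
  (∑ i, (XiCount (rr i) b ((aOf (dRT rr tt) b : ℕ) : ℤ) (e i) x : ℤ))
    - (∑ j, (XiCount (tt j) b ((aOf (dRT rr tt) b : ℕ) : ℤ) (f j) x : ℤ))

/-- `ei` is an admissible choice for the pair `p` and `b`: positive with `b·ei ≡ c (mod s)`. -/
def goodChoice (p : ℤ × ℤ) (b : ℕ) (ei : ℤ) : Prop :=
  inV p b → 0 < ei ∧ p.2 ∣ ((b : ℤ) * ei - (cOf p b : ℤ))

end

lemma sub_den_dvd (q r : ℚ) : ((q - r).den : ℤ) ∣ (q.den * r.den : ℤ) := by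
  have h : q - r = Rat.divInt (q.num * r.den - r.num * q.den) (q.den * r.den) := by
    rw [Rat.divInt_eq_div]
    push_cast
    rw [eq_div_iff (by positivity)]
    have h1 : (q.num : ℚ) = q * q.den := by
      exact (div_eq_iff (by positivity)).mp (Rat.num_div_den q)
    have h2 : (r.num : ℚ) = r * r.den := by
      exact (div_eq_iff (by positivity)).mp (Rat.num_div_den r)
    rw [h1, h2]; ring
  rw [h]
  exact Rat.den_dvd _ _

lemma dwork_unique (b : ℕ) (hb : 0 < b) (α θ1 θ2 : ℚ)
    (h1 : Nat.Coprime θ1.den b ∧ ∃ k : ℤ, 0 ≤ k ∧ k < (b:ℤ) ∧ (b:ℚ) * θ1 - α = (k:ℚ))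
    (h2 : Nat.Coprime θ2.den b ∧ ∃ k : ℤ, 0 ≤ k ∧ k < (b:ℤ) ∧ (b:ℚ) * θ2 - α = (k:ℚ)) :
    θ1 = θ2 := by
  obtain ⟨hc1, k1, hk1, hk1', he1⟩ := h1
  obtain ⟨hc2, k2, hk2, hk2', he2⟩ := h2
  have hbQ : (0:ℚ) < b := by exact_mod_cast hb
  have hδ : θ1 - θ2 = ((k1 - k2 : ℤ) : ℚ) / (b : ℚ) := by
    field_simp
    push_cast
    linarith [he1, he2]
  have hδ' : θ1 - θ2 = Rat.divInt (k1 - k2 : ℤ) (b : ℤ) := by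
    rw [Rat.divInt_eq_div, hδ]; push_cast; ring
  have hdvd1 : ((θ1 - θ2).den : ℤ) ∣ (b : ℤ) := hδ' ▸ Rat.den_dvd _ _
  have hdvd1' : (θ1 - θ2).den ∣ b := by exact_mod_cast hdvd1
  have hdvd2 : ((θ1 - θ2).den : ℤ) ∣ (θ1.den * θ2.den : ℤ) := sub_den_dvd θ1 θ2
  have hdvd2' : (θ1 - θ2).den ∣ θ1.den * θ2.den := by exact_mod_cast hdvd2
  have hcop : Nat.Coprime (θ1.den * θ2.den) b := Nat.Coprime.mul hc1 hc2
  have hden1 : (θ1 - θ2).den = 1 :=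
    Nat.Coprime.eq_one_of_dvd (Nat.Coprime.coprime_dvd_left hdvd2' hcop) hdvd1'
  have ⟨m, hm⟩ : ∃ m : ℤ, θ1 - θ2 = (m : ℚ) := ⟨(θ1 - θ2).num, ((Rat.den_eq_one_iff _).mp hden1).symm⟩
  have hbm : (b : ℤ) * m = k1 - k2 := by
    have : (b : ℚ) * m = ((k1 - k2 : ℤ) : ℚ) := by
      rw [← hm, hδ]; field_simp
    exact_mod_cast this
  have hm0 : m = 0 := by nlinarith [hk1, hk1', hk2, hk2', hbm]
  have : θ1 - θ2 = 0 := by rw [hm, hm0]; norm_num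
  linarith

/-- explicit formula for the generalized Dwork map. -/
theorem dwork_formula (b : ℕ) (hb : 0 < b) (α : ℚ) (hα : Nat.Coprime α.den b)
    (a : ℤ) (ha : (a * (b : ℤ)) % (α.den : ℤ) = 1 % (α.den : ℤ)) :
    dwork b α = (a : ℚ) * α + ((⌊(α - 1) / (b : ℚ) - (a : ℚ) * α⌋ : ℤ) : ℚ) + 1 ∧
      ∃ m : ℤ, dwork b α = (m : ℚ) / (α.den : ℚ) := by
  set F : ℤ := ⌊(α - 1) / (b : ℚ) - (a : ℚ) * α⌋ with hF
  set θ : ℚ := (a : ℚ) * α + (F : ℚ) + 1 with hθdef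
  have hbQ : (0:ℚ) < b := by exact_mod_cast hb
  have hdQ : (0:ℚ) < (α.den : ℚ) := by exact_mod_cast α.pos
  have hnum : (α.num : ℚ) = α * α.den := (div_eq_iff (by positivity)).mp (Rat.num_div_den α)
  have hdvd : (α.den : ℤ) ∣ a * b - 1 := Int.ModEq.dvd (Int.ModEq.symm ha)
  obtain ⟨q, hq⟩ := hdvd
  -- θ as a fraction over α.den
  have hθfrac : θ = ((a * α.num + (F + 1) * α.den : ℤ) : ℚ) / (α.den : ℚ) := by
    rw [hθdef]
    push_cast
    rw [eq_div_iff (by positivity), hnum]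
    ring
  -- the integer k
  set k : ℤ := q * α.num + b * (F + 1) with hk
  have hkQ : (b : ℚ) * θ - α = (k : ℚ) := by
    have hq' : (a * b - 1 : ℚ) = (α.den : ℚ) * (q : ℚ) := by exact_mod_cast hq
    rw [hθdef, hk]
    push_cast
    have : (a : ℚ) * b * α - α = (α.den : ℚ) * q * α := by
      rw [← hq']; ring
    linear_combination this - (q : ℚ) * hnum
  have hfl := Int.floor_le ((α - 1) / (b : ℚ) - (a : ℚ) * α)
  have hfl' := Int.lt_floor_add_one ((α - 1) / (b : ℚ) - (a : ℚ) * α)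
  rw [← hF] at hfl hfl'
  have hk0 : 0 ≤ k := by
    have hlt : (-1 : ℚ) < (k : ℚ) := by
      rw [← hkQ, hθdef]
      have h2 : α - 1 < ((a : ℚ) * α + ((F : ℚ) + 1)) * b :=
        (div_lt_iff₀ hbQ).mp (by linarith)
      nlinarith
    have : (-1 : ℤ) < k := by exact_mod_cast hlt
    omega
  have hkb : k < b := by
    have hlt : (k : ℚ) < (b : ℚ) := by
      rw [← hkQ, hθdef]
      have h2 : ((F : ℚ) + (a : ℚ) * α) * b ≤ α - 1 := (le_div_iff₀ hbQ).mp (by linarith)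
      nlinarith
    exact_mod_cast hlt
  -- θ satisfies the defining property
  have hθprop : Nat.Coprime θ.den b ∧ ∃ k : ℤ, 0 ≤ k ∧ k < (b : ℤ) ∧ (b : ℚ) * θ - α = (k : ℚ) := by
    constructor
    · have hdvd' : θ.den ∣ α.den := by
        have := Rat.den_dvd (a * α.num + (F + 1) * α.den) (α.den : ℤ)
        rw [Rat.divInt_eq_div,
          show ((α.den : ℤ) : ℚ) = (α.den : ℚ) by push_cast; ring, ← hθfrac] at this
        exact_mod_cast this
      exact Nat.Coprime.coprime_dvd_left hdvd' hα
    · exact ⟨k, hk0, hkb, hkQ⟩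
  have hE : ∃ θ : ℚ, Nat.Coprime θ.den b ∧
      ∃ k : ℤ, 0 ≤ k ∧ k < (b : ℤ) ∧ (b : ℚ) * θ - α = (k : ℚ) := ⟨θ, hθprop⟩
  have hdw : dwork b α = hE.choose := by rw [dwork, dif_pos hE]
  have hmain : dwork b α = θ := by
    rw [hdw]
    exact dwork_unique b hb α _ _ hE.choose_spec hθprop
  refine ⟨hmain, a * α.num + (F + 1) * α.den, ?_⟩
  rw [hmain, hθfrac]
end

section
/- Let b be a positive integer, let α ∈ S_b^{-1}ℤ, and let a be an integer satisfying a·b ≡ 1 (mod d(α)). Then D_b(α) = ⟨a·α⟩ − ⌊⟨a·α⟩ − α/b⌋. -/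
open Polynomial
open scoped Classical

section AuxDwork

private lemma dwork_spec_unique {b : ℕ} (hb : 0 < b) {α θ₁ θ₂ : ℚ}
    (h₁ : Nat.Coprime θ₁.den b ∧ ∃ k : ℤ, 0 ≤ k ∧ k < (b : ℤ) ∧ (b : ℚ) * θ₁ - α = (k : ℚ))
    (h₂ : Nat.Coprime θ₂.den b ∧ ∃ k : ℤ, 0 ≤ k ∧ k < (b : ℤ) ∧ (b : ℚ) * θ₂ - α = (k : ℚ)) :
    θ₁ = θ₂ := by
  obtain ⟨hc₁, k₁, hk₁0, hk₁b, he₁⟩ := h₁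
  obtain ⟨hc₂, k₂, hk₂0, hk₂b, he₂⟩ := h₂
  have hbQ : (0 : ℚ) < (b : ℚ) := by exact_mod_cast hb
  have hq : θ₁ - θ₂ = ((k₁ - k₂ : ℤ) : ℚ) / ((b : ℤ) : ℚ) := by
    field_simp
    push_cast
    linarith
  have hden : ((θ₁ - θ₂).den : ℤ) ∣ (b : ℤ) := by
    rw [hq, ← Rat.divInt_eq_div]
    exact Rat.den_dvd _ _
  have hdvd : (θ₁ - θ₂).den ∣ b := by exact_mod_cast hden
  have hsub : (θ₁ - θ₂).den ∣ θ₁.den * θ₂.den := by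
    have := Rat.add_den_dvd θ₁ (-θ₂)
    simpa [sub_eq_add_neg, Rat.neg_den] using this
  have hcop : Nat.Coprime (θ₁ - θ₂).den b :=
    Nat.Coprime.coprime_dvd_left hsub (Nat.Coprime.mul hc₁ hc₂)
  have hden1 : (θ₁ - θ₂).den = 1 := hcop.eq_one_of_dvd hdvd
  have hint : ((θ₁ - θ₂).num : ℚ) = θ₁ - θ₂ := Rat.coe_int_num_of_den_eq_one hden1
  set m : ℤ := (θ₁ - θ₂).num with hm
  have hbm : (b : ℤ) * m = k₁ - k₂ := by
    have : ((b : ℤ) * m : ℚ) = ((k₁ - k₂ : ℤ) : ℚ) := by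
      push_cast
      rw [hint]
      field_simp at hq
      push_cast at hq ⊢
      linarith
    exact_mod_cast this
  have hbZ : (0 : ℤ) < (b : ℤ) := by exact_mod_cast hb
  have hm0 : m = 0 := by
    have h1 : (b : ℤ) * m < (b : ℤ) * 1 := by rw [mul_one]; omega
    have h2 : (b : ℤ) * (-1) < (b : ℤ) * m := by
      have : -(b : ℤ) < (b : ℤ) * m := by omega
      linarith
    have hlt : m < 1 := lt_of_mul_lt_mul_left h1 (le_of_lt hbZ)
    have hgt : (-1 : ℤ) < m := lt_of_mul_lt_mul_left h2 (le_of_lt hbZ)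
    omega
  have : θ₁ - θ₂ = 0 := by rw [← hint, hm0]; simp
  linarith

private lemma dwork_eq_of_spec {b : ℕ} (hb : 0 < b) {α θ : ℚ}
    (h : Nat.Coprime θ.den b ∧ ∃ k : ℤ, 0 ≤ k ∧ k < (b : ℤ) ∧ (b : ℚ) * θ - α = (k : ℚ)) :
    dwork b α = θ := by
  have hex : ∃ θ : ℚ, Nat.Coprime θ.den b ∧
      ∃ k : ℤ, 0 ≤ k ∧ k < (b : ℤ) ∧ (b : ℚ) * θ - α = (k : ℚ) := ⟨θ, h⟩
  rw [dwork, dif_pos hex]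
  exact dwork_spec_unique hb hex.choose_spec h

private lemma dwork_eq_formula (b : ℕ) (hb : 0 < b) (α q : ℚ)
    (hqden : Nat.Coprime q.den b) (M : ℤ) (hM : (b : ℚ) * q - α = (M : ℚ)) :
    dwork b α = q - (⌊q - α / (b : ℚ)⌋ : ℚ) := by
  have hbQ : (0 : ℚ) < (b : ℚ) := by exact_mod_cast hb
  set y : ℚ := q - α / (b : ℚ) with hy
  have hby : (b : ℚ) * y = (M : ℚ) := by
    rw [hy]
    field_simp
    linarith [hM]
  apply dwork_eq_of_spec hb
  constructor
  · have hsub : (q - (⌊y⌋ : ℚ)).den ∣ q.den * ((⌊y⌋ : ℚ)).den := by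
      have := Rat.add_den_dvd q (-(⌊y⌋ : ℚ))
      simpa [sub_eq_add_neg, Rat.neg_den] using this
    rw [Rat.den_intCast, mul_one] at hsub
    exact Nat.Coprime.coprime_dvd_left hsub hqden
  · refine ⟨M - (b : ℤ) * ⌊y⌋, ?_, ?_, ?_⟩
    · have h1 : (⌊y⌋ : ℚ) ≤ y := Int.floor_le y
      have h2 : (b : ℚ) * (⌊y⌋ : ℚ) ≤ (b : ℚ) * y :=
        mul_le_mul_of_nonneg_left h1 (le_of_lt hbQ)
      have : ((b : ℤ) * ⌊y⌋ : ℚ) ≤ (M : ℚ) := by push_cast; linarith [hby]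
      have : (b : ℤ) * ⌊y⌋ ≤ M := by exact_mod_cast this
      omega
    · have h1 : y < (⌊y⌋ : ℚ) + 1 := Int.lt_floor_add_one y
      have h2 : (b : ℚ) * y < (b : ℚ) * ((⌊y⌋ : ℚ) + 1) :=
        mul_lt_mul_of_pos_left h1 hbQ
      have : (M : ℚ) < (((b : ℤ) * ⌊y⌋ + b : ℤ) : ℚ) := by push_cast; linarith [hby]
      have : M < (b : ℤ) * ⌊y⌋ + (b : ℤ) := by exact_mod_cast this
      omega
    · push_cast
      have : (b : ℚ) * (q - (⌊y⌋ : ℚ)) - α = (b : ℚ) * y - (b : ℚ) * (⌊y⌋ : ℚ) := by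
        rw [hy]; field_simp; ring
      rw [this, hby]

end AuxDwork

/-- `D_b(α) = ⟨a·α⟩ − ⌊⟨a·α⟩ − α/b⌋`. -/
theorem dwork_eq_angle_sub_floor (b : ℕ) (hb : 0 < b) (α : ℚ) (hα : Nat.Coprime α.den b)
    (a : ℤ) (ha : (a * (b : ℤ)) % (α.den : ℤ) = 1 % (α.den : ℤ)) :
    ((dwork b α : ℚ) : ℝ) =
      cangle ((a : ℝ) * (α : ℝ)) -
        ((⌊cangle ((a : ℝ) * (α : ℝ)) - (α : ℝ) / (b : ℝ)⌋ : ℤ) : ℝ) := by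
  have hbQ : (0 : ℚ) < (b : ℚ) := by exact_mod_cast hb
  have hbR : (0 : ℝ) < (b : ℝ) := by exact_mod_cast hb
  by_cases hd : α.den = 1
  · -- α is an integer
    have hαint : (α.num : ℚ) = α := Rat.coe_int_num_of_den_eq_one hd
    have hcan : cangle ((a : ℝ) * (α : ℝ)) = 1 := by
      rw [cangle, if_pos]
      refine ⟨a * α.num, ?_⟩
      rw [← hαint]
      push_cast
      simp
    have hdw : dwork b α = 1 - (⌊(1 : ℚ) - α / (b : ℚ)⌋ : ℚ) := by
      apply dwork_eq_formula b hb α 1 (by simp) ((b : ℤ) - α.num)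
      rw [← hαint]
      push_cast
      simp
    rw [hcan, hdw]
    have hfl : ⌊(1 : ℝ) - (α : ℝ) / (b : ℝ)⌋ = ⌊(1 : ℚ) - α / (b : ℚ)⌋ := by
      rw [← Rat.floor_cast (α := ℝ)]
      norm_cast
    rw [hfl]
    push_cast
    ring
  · -- α is not an integer
    have hd1 : 1 < α.den := by
      have := α.den_pos; omega
    have hdvd : (α.den : ℤ) ∣ a * (b : ℤ) - 1 := by
      have : a * (b : ℤ) ≡ 1 [ZMOD (α.den : ℤ)] := ha
      simpa using this.symm.dvd
    obtain ⟨t, ht⟩ := hdvd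
    have hkey : (a * (b : ℤ) : ℚ) * α - α = ((t * α.num : ℤ) : ℚ) := by
      have hda : α * (α.den : ℚ) = (α.num : ℚ) := Rat.mul_den_eq_num α
      have : ((a * (b : ℤ) - 1 : ℤ) : ℚ) * α = ((t : ℤ) : ℚ) * ((α.den : ℤ) : ℚ) * α := by
        rw [ht]; push_cast; ring
      push_cast at this ⊢
      calc a * (b : ℚ) * α - α = ((a * b - 1 : ℚ)) * α := by ring
        _ = (t : ℚ) * ((α.den : ℚ) * α) := by push_cast at this; linarith [this]
        _ = (t : ℚ) * (α.num : ℚ) := by rw [mul_comm α ((α.den : ℚ))] at hda; rw [hda]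
    have hnotint : ¬ ∃ m : ℤ, (a : ℝ) * (α : ℝ) = (m : ℝ) := by
      rintro ⟨m, hm⟩
      have hmQ : (a : ℚ) * α = (m : ℚ) := by
        have : (((a : ℚ) * α : ℚ) : ℝ) = ((m : ℚ) : ℝ) := by push_cast; exact hm
        exact_mod_cast this
      have : α = ((b : ℤ) * m - t * α.num : ℤ) := by
        push_cast
        have := hkey
        push_cast at this
        nlinarith [hmQ, this]
      rw [this, Rat.den_intCast] at hd
      exact hd rfl
    have hcan : cangle ((a : ℝ) * (α : ℝ)) = ((Int.fract ((a : ℚ) * α) : ℚ) : ℝ) := by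
      rw [cangle, if_neg hnotint, Rat.cast_fract]
      push_cast
      ring_nf
    set q : ℚ := Int.fract ((a : ℚ) * α) with hq
    have hqden : Nat.Coprime q.den b := by
      have h1 : q.den ∣ ((a : ℚ) * α).den * ((⌊(a : ℚ) * α⌋ : ℚ)).den := by
        have := Rat.add_den_dvd ((a : ℚ) * α) (-(⌊(a : ℚ) * α⌋ : ℚ))
        simpa [hq, Int.fract, sub_eq_add_neg, Rat.neg_den] using this
      rw [Rat.den_intCast, mul_one] at h1
      have h2 : ((a : ℚ) * α).den ∣ ((a : ℚ)).den * α.den := Rat.mul_den_dvd _ _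
      rw [Rat.den_intCast, one_mul] at h2
      exact Nat.Coprime.coprime_dvd_left (h1.trans h2) hα
    have hM : (b : ℚ) * q - α = ((t * α.num - (b : ℤ) * ⌊(a : ℚ) * α⌋ : ℤ) : ℚ) := by
      rw [hq, Int.fract]
      push_cast
      push_cast at hkey
      nlinarith [hkey]
    have hdw : dwork b α = q - (⌊q - α / (b : ℚ)⌋ : ℚ) :=
      dwork_eq_formula b hb α q hqden _ hM
    rw [hcan, hdw]
    have hfl : ⌊((q : ℚ) : ℝ) - (α : ℝ) / (b : ℝ)⌋ = ⌊q - α / (b : ℚ)⌋ := by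
      rw [← Rat.floor_cast (α := ℝ)]
      norm_cast
    rw [hfl]
    push_cast
    ring
end

section
/- Let b be a positive integer, let α ∈ S_b^{-1}ℤ, and let a be an integer satisfying a·b ≡ 1 (mod d(α)). If b ≥ 𝔫_α, then D_b(α) = ⟨a·α⟩ when α is not a nonpositive integer, and D_b(α) = 0 when α is a nonpositive integer. -/
open Polynomial
open scoped Classical

lemma dwork_unique_s3 (b : ℕ) (hb : 0 < b) (α θ : ℚ)
    (hθ : Nat.Coprime θ.den b ∧ ∃ k : ℤ, 0 ≤ k ∧ k < (b : ℤ) ∧ (b : ℚ) * θ - α = (k : ℚ)) :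
    dwork b α = θ := by
  have h : ∃ θ : ℚ, Nat.Coprime θ.den b ∧
      ∃ k : ℤ, 0 ≤ k ∧ k < (b : ℤ) ∧ (b : ℚ) * θ - α = (k : ℚ) := ⟨θ, hθ⟩
  rw [dwork, dif_pos h]
  obtain ⟨hc1, k₁, hk₁0, hk₁b, hk₁⟩ := h.choose_spec
  obtain ⟨hc2, k₂, hk₂0, hk₂b, hk₂⟩ := hθ
  set θ₁ := h.choose
  -- δ := θ₁ - θ
  have hδ : (b : ℚ) * (θ₁ - θ) = ((k₁ - k₂ : ℤ) : ℚ) := by push_cast; linarith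
  have hden : (θ₁ - θ).den ∣ θ₁.den * θ.den := by
    have := Rat.add_den_dvd θ₁ (-θ)
    simpa [sub_eq_add_neg] using this
  have hcop : Nat.Coprime (θ₁ - θ).den b :=
    Nat.Coprime.coprime_dvd_left hden (Nat.Coprime.mul hc1 hc2)
  have hdvd : ((θ₁ - θ).den : ℤ) ∣ (b : ℤ) := by
    have : θ₁ - θ = Rat.divInt (k₁ - k₂) (b : ℤ) := by
      rw [Rat.divInt_eq_div, eq_div_iff (by exact_mod_cast hb.ne' : ((b:ℤ):ℚ) ≠ 0)]
      push_cast at hδ ⊢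
      linarith
    rw [this]
    exact Rat.den_dvd _ _
  have hden1 : (θ₁ - θ).den = 1 := by
    exact Nat.Coprime.eq_one_of_dvd hcop (Int.ofNat_dvd.mp (by exact_mod_cast hdvd))
  have hint : ((θ₁ - θ).num : ℚ) = θ₁ - θ := (Rat.den_eq_one_iff _).mp hden1
  set m := (θ₁ - θ).num with hm
  have hbm : (b : ℤ) * m = k₁ - k₂ := by
    have : ((b : ℤ) * m : ℚ) = ((k₁ - k₂ : ℤ) : ℚ) := by push_cast; rw [hint] at *; push_cast at hδ ⊢; linarith
    exact_mod_cast this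
  have hm0 : m = 0 := by
    rcases lt_trichotomy m 0 with h | h | h
    · nlinarith [hbm, hk₁0, hk₂b]
    · exact h
    · nlinarith [hbm, hk₂0, hk₁b]
  have : θ₁ - θ = 0 := by rw [← hint, hm0]; simp
  linarith

/-- simplified formula for `D_b(α)` when `b ≥ 𝔫_α`. -/
theorem dwork_eq_angle_of_large (b : ℕ) (hb : 0 < b) (α : ℚ) (hα : Nat.Coprime α.den b)
    (a : ℤ) (ha : (a * (b : ℤ)) % (α.den : ℤ) = 1 % (α.den : ℤ)) (hbig : frakn α ≤ (b : ℤ)) :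
    (¬ IsNonPosInt α → ((dwork b α : ℚ) : ℝ) = cangle ((a : ℝ) * (α : ℝ))) ∧
      (IsNonPosInt α → dwork b α = 0) := by
  have hbZ : (0 : ℤ) < (b : ℤ) := by exact_mod_cast hb
  constructor
  · intro hnp
    by_cases hd : α.den = 1
    · -- α is a positive integer
      obtain ⟨n, hn⟩ : ∃ n : ℤ, α = (n : ℚ) := ⟨α.num, ((Rat.den_eq_one_iff α).mp hd).symm⟩
      subst hn
      have hnum : ((n : ℚ) : ℚ).num = n := Rat.num_intCast n
      have hpos : 0 < n := by
        by_contra h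
        push_neg at h
        exact hnp ⟨n, h, rfl⟩
      have h0α : (0 : ℚ) ≤ (n : ℚ) := by exact_mod_cast hpos.le
      rw [frakn, if_pos h0α, hnum] at hbig
      have hdw : dwork b ((n : ℚ)) = 1 := by
        apply dwork_unique_s3 b hb
        refine ⟨by simp, (b : ℤ) - n, by omega, by omega, ?_⟩
        push_cast; ring
      rw [hdw]
      have hex : ∃ t : ℤ, (a : ℝ) * (((n : ℚ) : ℚ) : ℝ) = (t : ℝ) :=
        ⟨a * n, by push_cast; ring⟩
      rw [cangle, if_pos hex]
      simp
    · -- α is not an integer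
      have hd1 : 1 < α.den := by
        have := α.den_nz
        omega
      set d : ℤ := (α.den : ℤ) with hdd
      have hdZ : 1 < d := by rw [hdd]; exact_mod_cast hd1
      have hdQ : (1 : ℚ) < (d : ℚ) := by exact_mod_cast hdZ
      obtain ⟨m, hm⟩ : d ∣ 1 - a * (b : ℤ) := Int.ModEq.dvd ha
      have key : (d : ℚ) * α = (α.num : ℚ) := by
        rw [hdd]
        push_cast
        rw [mul_comm]
        exact_mod_cast Rat.mul_den_eq_num α
      have habq : (a : ℚ) * (b : ℚ) = 1 - (d : ℚ) * (m : ℚ) := by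
        have : (1 : ℤ) - a * b = d * m := hm
        have := congrArg (Int.cast : ℤ → ℚ) this
        push_cast at this
        linarith
      -- a*α is not an integer
      have hnotint : ¬ ∃ t : ℤ, (a : ℚ) * α = (t : ℚ) := by
        rintro ⟨t, ht⟩
        have : α = (((b : ℤ) * t + m * α.num : ℤ) : ℚ) := by
          push_cast
          linear_combination (b : ℚ) * ht - α * habq + (m : ℚ) * key
        have : α.den = 1 := by rw [this]; exact Rat.den_intCast _
        omega
      set θ : ℚ := Int.fract ((a : ℚ) * α) with hθ
      have hθpos : 0 < θ := by
        rw [hθ, Int.fract_pos]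
        intro h
        exact hnotint ⟨⌊(a : ℚ) * α⌋, h⟩
      have hθlt : θ < 1 := Int.fract_lt_one _
      set N : ℤ := a * α.num - d * ⌊(a : ℚ) * α⌋ with hNdef
      have hN : (N : ℚ) = (d : ℚ) * θ := by
        rw [hθ, Int.fract, hNdef]
        push_cast
        linear_combination (-(a : ℚ)) * key
      have hN1 : 1 ≤ N := by
        have : (0 : ℚ) < (N : ℚ) := by rw [hN]; nlinarith [hθpos, hdQ]
        have : 0 < N := by exact_mod_cast this
        omega
      have hNd : N ≤ d - 1 := by
        have : (N : ℚ) < (d : ℚ) := by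
          rw [hN]
          nlinarith [hθlt, hθpos, hdQ]
        have : N < d := by exact_mod_cast this
        omega
      set K : ℤ := -m * α.num - (b : ℤ) * ⌊(a : ℚ) * α⌋ with hKdef
      have hK : (b : ℚ) * θ - α = (K : ℚ) := by
        rw [hθ, Int.fract, hKdef]
        push_cast
        linear_combination α * habq - (m : ℚ) * key
      have hKd : d * K = (b : ℤ) * N - α.num := by
        have : ((d * K : ℤ) : ℚ) = (((b : ℤ) * N - α.num : ℤ) : ℚ) := by
          push_cast
          linear_combination (-(d : ℚ)) * hK - (b : ℚ) * hN - key
        exact_mod_cast this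
      have hnum_le : α.num ≤ (b : ℤ) := by
        by_cases h0 : 0 ≤ α
        · rw [frakn, if_pos h0] at hbig; exact hbig
        · have : ¬ 0 ≤ α.num := fun h => h0 (Rat.num_nonneg.mp h)
          omega
      have hnum_gt : -(b : ℤ) < α.num := by
        by_cases h0 : 0 ≤ α
        · have : 0 ≤ α.num := Rat.num_nonneg.mpr h0
          omega
        · rw [frakn, if_neg h0] at hbig
          have hneg : α.num < 0 := by
            have : ¬ 0 ≤ α.num := fun h => h0 (Rat.num_nonneg.mp h)
            omega
          rw [abs_of_neg hneg] at hbig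
          omega
      have hK0 : 0 ≤ K := by nlinarith [hKd, hN1, hnum_le, hdZ, hbZ]
      have hKb : K < (b : ℤ) := by nlinarith [hKd, hNd, hnum_gt, hdZ, hbZ]
      have hcop : Nat.Coprime θ.den b := by
        apply Nat.Coprime.coprime_dvd_left _ hα
        have h1 : θ.den ∣ ((a : ℚ) * α).den * ((-⌊(a : ℚ) * α⌋ : ℤ) : ℚ).den := by
          have := Rat.add_den_dvd ((a : ℚ) * α) ((-⌊(a : ℚ) * α⌋ : ℤ) : ℚ)
          rw [hθ, Int.fract]
          push_cast at this ⊢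
          simpa [sub_eq_add_neg] using this
        have h2 : ((a : ℚ) * α).den ∣ (a : ℚ).den * α.den := Rat.mul_den_dvd _ _
        simp only [Rat.den_intCast, one_mul, mul_one] at h1 h2
        exact h1.trans h2
      have hdw : dwork b α = θ := dwork_unique_s3 b hb α θ ⟨hcop, K, hK0, hKb, hK⟩
      rw [hdw]
      have hnotintR : ¬ ∃ t : ℤ, (a : ℝ) * (α : ℝ) = (t : ℝ) := by
        rintro ⟨t, ht⟩
        apply hnotint
        refine ⟨t, ?_⟩
        have : (((a : ℚ) * α : ℚ) : ℝ) = ((t : ℚ) : ℝ) := by push_cast; linarith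
        exact_mod_cast this
      rw [cangle, if_neg hnotintR, hθ]
      have hcast : ((a : ℝ) * (α : ℝ)) = (((a : ℚ) * α : ℚ) : ℝ) := by push_cast; ring
      rw [hcast]
      exact Rat.cast_fract _
  · rintro ⟨m, hm0, hm⟩
    apply dwork_unique_s3 b hb
    refine ⟨by simp, -m, by omega, ?_, ?_⟩
    · have hnum : α.num = m := by rw [hm]; exact Rat.num_intCast m
      rcases eq_or_lt_of_le hm0 with h | h
      · omega
      · have hαneg : ¬ 0 ≤ α := by
          rw [hm]
          push_neg
          exact_mod_cast h
        rw [frakn, if_neg hαneg, hnum, abs_of_neg h] at hbig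
        omega
    · rw [hm]; push_cast; ring
end

section
/- Let b and c be positive integers, and let α be a rational number whose reduced positive denominator is coprime to b·c. Then D_b(D_c(α)) = D_{bc}(α). In particular, the n-fold iterate of D_b equals D_{b^n}; moreover, if α is not a nonpositive integer and b^n ≥ 𝔫_α with b^n ≡ 1 (mod d(α)), then the n-fold iterate of D_b applied to α equals ⟨α⟩. -/
open Polynomial
open scoped Classical

/-!
`D_b(α)` is pinned down by two conditions on a rational `θ`: its denominator is coprime to `b`,
and `b θ - α ∈ {0, …, b-1}`. Two such `θ` differ by a rational with denominator coprime to `b`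
whose `b`-fold multiple is an integer of absolute value `< b`, so they coincide. For the
composition rule, if `b c θ - α = k = c k₁ + k₀` with `0 ≤ k₀ < c`, then `φ = b θ - k₁` satisfies
the conditions for `D_c(α)`, and `θ` those for `D_b(φ)`. For the last claim, `θ = α + 1 - ⌈α⌉`
is the rational `⟨α⟩`; `B θ - α = (B - 1) α + B (1 - ⌈α⌉)` is an integer when `d(α) ∣ B - 1`,
and `𝔫_α ≤ B` is exactly what puts it in `{0, …, B-1}`, since `θ` and (for `α < 0`) `1 - θ`
are at least `1 / d(α)`.
-/

def IsDworkValue (b : ℕ) (α θ : ℚ) : Prop :=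
  Nat.Coprime θ.den b ∧ ∃ k : ℤ, 0 ≤ k ∧ k < (b : ℤ) ∧ (b : ℚ) * θ - α = (k : ℚ)

namespace Rat

lemma den_dvd_of_mul_eq_intCast {q : ℚ} {n m : ℤ} (h : q * n = m) : (q.den : ℤ) ∣ n := by
  rcases eq_or_ne n 0 with rfl | hn
  · exact dvd_zero _
  have hq : q = m /. n := by
    rw [Rat.divInt_eq_div, ← h]
    field_simp
  rw [hq]
  exact Rat.den_dvd m n

lemma den_eq_one_of_mul_eq_intCast {q : ℚ} {b : ℕ} {m : ℤ} (hq : q.den.Coprime b)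
    (h : q * b = m) : q.den = 1 :=
  hq.eq_one_of_dvd <| Int.natCast_dvd_natCast.mp <|
    den_dvd_of_mul_eq_intCast (n := b) (by exact_mod_cast h)

lemma sub_den_coprime {p q : ℚ} {b : ℕ} (hp : p.den.Coprime b) (hq : q.den.Coprime b) :
    (p - q).den.Coprime b :=
  Nat.Coprime.coprime_dvd_left (sub_den_dvd p q) (hp.mul_left hq)

lemma natCast_mul_den_dvd (n : ℕ) (q : ℚ) : ((n : ℚ) * q).den ∣ q.den := by
  simpa using mul_den_dvd (n : ℚ) q

lemma inv_den_le {q : ℚ} (hq : 0 < q) : (q.den : ℚ)⁻¹ ≤ q := by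
  have hnum : (1 : ℚ) ≤ q.num := by exact_mod_cast Rat.num_pos.mpr hq
  calc (q.den : ℚ)⁻¹ = 1 / q.den := inv_eq_one_div _
    _ ≤ q.num / q.den := by gcongr
    _ = q := Rat.num_div_den q

end Rat

namespace IsDworkValue

variable {b c : ℕ} {α θ φ : ℚ}

theorem unique (hθ : IsDworkValue b α θ) (hφ : IsDworkValue b α φ) : θ = φ := by
  obtain ⟨hθden, k, hk0, hkb, hk⟩ := hθ
  obtain ⟨hφden, l, hl0, hlb, hl⟩ := hφ
  have hmul : (θ - φ) * b = ((k - l : ℤ) : ℚ) := by push_cast; linarith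
  have hint := (Rat.den_eq_one_iff _).mp
    (Rat.den_eq_one_of_mul_eq_intCast (Rat.sub_den_coprime hθden hφden) hmul)
  rw [← hint] at hmul
  have hdvd : (b : ℤ) ∣ k - l := ⟨(θ - φ).num, by rw [mul_comm]; exact_mod_cast hmul.symm⟩
  have hkl : k = l := by
    have := Int.eq_zero_of_abs_lt_dvd hdvd (abs_sub_lt_iff.mpr ⟨by omega, by omega⟩)
    omega
  subst hkl
  have hb : (b : ℚ) ≠ 0 := by exact_mod_cast (show b ≠ 0 by omega)
  exact mul_left_cancel₀ hb (by linarith)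

theorem dwork_eq (h : IsDworkValue b α θ) : dwork b α = θ := by
  have hex : ∃ θ, IsDworkValue b α θ := ⟨θ, h⟩
  rw [dwork]
  exact (dif_pos hex).trans (hex.choose_spec.unique h)

theorem exists_of_mul (h : IsDworkValue (b * c) α θ) :
    ∃ φ, IsDworkValue c α φ ∧ IsDworkValue b φ θ := by
  obtain ⟨hθden, k, hk0, hkbc, hk⟩ := h
  have hc : (0 : ℤ) < c := by
    have hbc : 0 < b * c := by exact_mod_cast hk0.trans_lt hkbc
    exact_mod_cast Nat.pos_of_mul_pos_left hbc
  refine ⟨b * θ - (k / c : ℤ), ⟨?_, k % c, Int.emod_nonneg _ hc.ne', Int.emod_lt_of_pos _ hc, ?_⟩,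
    ⟨Nat.Coprime.coprime_mul_right_right hθden, k / c, Int.ediv_nonneg hk0 hc.le,
      (Int.ediv_lt_iff_lt_mul hc).mpr (by exact_mod_cast hkbc), by ring⟩⟩
  · rw [Rat.sub_intCast_den]
    exact Nat.Coprime.coprime_dvd_left (Rat.natCast_mul_den_dvd b θ)
      (Nat.Coprime.coprime_mul_left_right hθden)
  · rw [Int.emod_def]
    push_cast at hk ⊢
    linarith

end IsDworkValue

theorem exists_isDworkValue {b : ℕ} {α : ℚ} (hb : 0 < b) (hα : α.den.Coprime b) :
    ∃ θ, IsDworkValue b α θ := by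
  obtain ⟨y, hy⟩ := Int.mod_coprime hα
  set k : ℤ := -α.num * y % b
  -- `k ≡ -α.num · α.den⁻¹ (mod b)`
  have hdvd : (b : ℤ) ∣ α.num + k * α.den := by
    rw [← Int.modEq_zero_iff_dvd]
    calc α.num + k * α.den ≡ α.num + -α.num * y * α.den [ZMOD b] :=
          ((Int.mod_modEq _ _).mul_right _).add_left _
      _ = α.num * (1 - α.den * y) := by ring
      _ ≡ α.num * (1 - 1) [ZMOD b] := ((hy.sub_left 1).mul_left _)
      _ = 0 := by ring
  obtain ⟨j, hj⟩ := hdvd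
  have hden : (α.den : ℚ) ≠ 0 := by positivity
  have hθ : ((j : ℚ) / α.den) * (α.den : ℤ) = j := by push_cast; field_simp
  refine ⟨j / α.den, ?_, k, Int.emod_nonneg _ (by omega), Int.emod_lt_of_pos _ (by omega), ?_⟩
  · exact Nat.Coprime.coprime_dvd_left
      (Int.natCast_dvd_natCast.mp (Rat.den_dvd_of_mul_eq_intCast hθ)) hα
  · have hjq : (b : ℚ) * j = α.num + k * α.den := by exact_mod_cast hj.symm
    have hαq : α * α.den = α.num := Rat.mul_den_eq_num α
    field_simp
    linear_combination hjq - hαq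

theorem isDworkValue_dwork {b : ℕ} {α : ℚ} (hb : 0 < b) (hα : α.den.Coprime b) :
    IsDworkValue b α (dwork b α) := by
  obtain ⟨θ, hθ⟩ := exists_isDworkValue hb hα
  rwa [hθ.dwork_eq]

theorem dwork_one (α : ℚ) : dwork 1 α = α :=
  IsDworkValue.dwork_eq ⟨Nat.coprime_one_right _, 0, le_rfl, one_pos, by simp⟩

theorem dwork_dwork {b c : ℕ} (hb : 0 < b) (hc : 0 < c) {α : ℚ} (hα : α.den.Coprime (b * c)) :
    dwork b (dwork c α) = dwork (b * c) α := by
  obtain ⟨φ, hφ, hθ⟩ := (isDworkValue_dwork (Nat.mul_pos hb hc) hα).exists_of_mul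
  rw [hφ.dwork_eq, hθ.dwork_eq]

theorem dwork_iterate {b : ℕ} (hb : 0 < b) {β : ℚ} (hβ : β.den.Coprime b) :
    ∀ n : ℕ, (dwork b)^[n] β = dwork (b ^ n) β
  | 0 => (dwork_one β).symm
  | n + 1 => by
    rw [Function.iterate_succ_apply', dwork_iterate hb hβ n, pow_succ',
      dwork_dwork hb (pow_pos hb n) (by rw [← pow_succ']; exact hβ.pow_right _)]

theorem cangle_eq_add_one_sub_ceil (x : ℝ) : cangle x = x + 1 - ⌈x⌉ := by
  unfold cangle
  split_ifs with h
  · obtain ⟨m, rfl⟩ := h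
    simp
  · refine (Int.fract_eq_zero_or_add_one_sub_ceil x).resolve_left ?_
    rw [Int.fract_eq_zero_iff]
    rintro ⟨m, rfl⟩
    exact h ⟨m, rfl⟩

section FractionalPart

variable {B : ℕ} {α : ℚ}

lemma natCast_div_den_le_mul {θ : ℚ} (hθ : 0 < θ) : (B : ℚ) / θ.den ≤ B * θ := by
  rw [div_eq_mul_inv]
  gcongr
  exact Rat.inv_den_le hθ

lemma add_one_sub_ceil_pos (α : ℚ) : 0 < α + 1 - ⌈α⌉ := by
  linarith [Int.ceil_lt_add_one α]

lemma le_mul_add_one_sub_ceil (hfrak : frakn α ≤ B) : α ≤ B * (α + 1 - ⌈α⌉) := by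
  rcases le_or_gt α 0 with hα0 | hα0
  · linarith [mul_nonneg (Nat.cast_nonneg (α := ℚ) B) (add_one_sub_ceil_pos α).le]
  · have hnum : α.num ≤ B := by rwa [frakn, if_pos hα0.le] at hfrak
    calc α = α.num / α.den := (Rat.num_div_den α).symm
      _ ≤ B / α.den := by gcongr; exact_mod_cast hnum
      _ ≤ B * (α + 1 - ⌈α⌉) := by
        simpa using natCast_div_den_le_mul (B := B) (add_one_sub_ceil_pos α)

lemma mul_add_one_sub_ceil_sub_lt (hα : ¬ IsNonPosInt α) (hfrak : frakn α ≤ B) :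
    B * (α + 1 - ⌈α⌉) - α < B := by
  rcases le_or_gt α 0 with hα0 | hα0
  · have hceil : (⌈α⌉ : ℚ) ≠ α := fun h =>
      hα ⟨⌈α⌉, Int.ceil_le.mpr (by simpa using hα0), h.symm⟩
    have hneg : α < 0 := lt_of_le_of_ne hα0 fun h => hceil (by simp [h])
    have hgap : 0 < ⌈α⌉ - α := sub_pos.mpr (lt_of_le_of_ne (Int.le_ceil α) hceil.symm)
    have hnum : 1 - α.num ≤ B := by
      rw [frakn, if_neg hneg.not_ge, abs_of_neg (Rat.num_neg.mpr hneg)] at hfrak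
      linarith
    have hden : ((⌈α⌉ : ℚ) - α).den = α.den := by simp
    calc B * (α + 1 - ⌈α⌉) - α < B * (α + 1 - ⌈α⌉) + (1 - α.num) / α.den := by
          have hsplit : (1 - α.num : ℚ) / α.den = 1 / α.den - α.num / α.den := by ring
          have hpos : (0 : ℚ) < 1 / α.den := by positivity
          linarith [Rat.num_div_den α]
      _ ≤ B * (α + 1 - ⌈α⌉) + B / α.den := by gcongr; exact_mod_cast hnum
      _ ≤ B * (α + 1 - ⌈α⌉) + B * (⌈α⌉ - α) := by
          gcongr
          simpa [hden] using natCast_div_den_le_mul (B := B) hgap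
      _ = B := by ring
  · have hθ : α + 1 - ⌈α⌉ ≤ 1 := by linarith [Int.le_ceil α]
    nlinarith [mul_le_mul_of_nonneg_left hθ (Nat.cast_nonneg (α := ℚ) B)]

theorem isDworkValue_add_one_sub_ceil (hα : ¬ IsNonPosInt α)
    (hfrak : frakn α ≤ B) (hB : B % α.den = 1 % α.den) :
    IsDworkValue B α (α + 1 - ⌈α⌉) := by
  obtain ⟨m, hm⟩ : (α.den : ℤ) ∣ B - 1 := Nat.modEq_iff_dvd.mp (Nat.ModEq.symm hB)
  have hk : (B : ℚ) * (α + 1 - ⌈α⌉) - α = ((m * α.num + B * (1 - ⌈α⌉) : ℤ) : ℚ) := by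
    have hmq : (B : ℚ) - 1 = α.den * m := by exact_mod_cast hm
    push_cast
    linear_combination α * hmq + m * Rat.mul_den_eq_num α
  refine ⟨?_, _, ?_, ?_, hk⟩
  · exact Nat.Coprime.symm (by simpa using Nat.ModEq.gcd_eq hB)
  · exact_mod_cast hk ▸ sub_nonneg.mpr (le_mul_add_one_sub_ceil hfrak)
  · exact_mod_cast hk ▸ mul_add_one_sub_ceil_sub_lt hα hfrak

end FractionalPart

/-- composition rule for generalized Dwork maps. -/
theorem dwork_comp (b c : ℕ) (hb : 0 < b) (hc : 0 < c) (α : ℚ)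
    (hα : Nat.Coprime α.den (b * c)) :
    dwork b (dwork c α) = dwork (b * c) α ∧
      (∀ (n : ℕ) (β : ℚ), Nat.Coprime β.den b → (dwork b)^[n] β = dwork (b ^ n) β) ∧
      (∀ n : ℕ, ¬ IsNonPosInt α → frakn α ≤ (b : ℤ) ^ n →
        (b ^ n) % α.den = 1 % α.den → (((dwork b)^[n] α : ℚ) : ℝ) = cangle (α : ℝ)) := by
  refine ⟨dwork_dwork hb hc hα, fun n β hβ => dwork_iterate hb hβ n, fun n hnp hfrak hB => ?_⟩
  have hθ := isDworkValue_add_one_sub_ceil hnp (by exact_mod_cast hfrak) hB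
  rw [dwork_iterate hb (Nat.Coprime.coprime_mul_right_right hα) n, hθ.dwork_eq,
    cangle_eq_add_one_sub_ceil, Rat.ceil_cast]
  norm_cast
end

section
/- Let 𝐫 = ((r_1,s_1),…,(r_v,s_v)) and 𝐭 = ((t_1,u_1),…,(t_w,u_w)) be vectors of pairs of integers with all s_i, u_j ≠ 0, and let n ∈ ℤ be such that Q_{𝐫,𝐭}(q; n) is well-defined and non-zero. Then for every positive integer b, v_{φ_b}(Q_{𝐫,𝐭}(q; n)) = Δ_b^{𝐫,𝐭}(n/b); moreover Δ_b^{𝐫,𝐭}(n/b) = 0 for all but finitely many b, and there exist ε ∈ {−1, 1} and m ∈ ℤ such that Q_{𝐫,𝐭}(q; n) = ε·q^m·∏_{b≥1} φ_b(q)^{Δ_b^{𝐫,𝐭}(n/b)}. -/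
open Polynomial
open scoped Classical

/-! Each factor `1 - q^e` with `e ≠ 0` is `±q^m ∏_{d ∣ e} φ_d(q)`, so `Q_{𝐫,𝐭}(q; n)` is `±q^m`
times a product of cyclotomic polynomials in which `φ_b` occurs exactly as often as `b` divides an
exponent `r + s·t` of a numerator factor (`t ∈ [0, n)`, or `t ∈ [n, 0)` counted negatively when
`n < 0`), minus the same count for the denominator. With `c = gcd(r, s, b)`, `b' = b/c` and
`s' = s/c`, the congruence `b ∣ r + s·t` has no solution unless `gcd(s', b') = 1`, and then it says
`t ≡ k (mod b')` for `k = b'·D_{b'}(r/s) − r/s ∈ [0, b')`. Counting such `t` gives `⌈(n − k)/b'⌉`,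
which is `δ_b(r, s, n/b)` because `r/s + ⌊1 − r/s⌋ ∈ (0, 1]`. -/

open Finset

section OrdAt

noncomputable def ordAt (p : ℚ[X]) (f : RatFunc ℚ) : ℤ := polyMult p f.num - polyMult p f.denom

theorem cycVal_eq_ordAt (b : ℕ) (f : RatFunc ℚ) : cycVal b f = ordAt (cyclotomic b ℚ) f := rfl

variable {p : ℚ[X]}

theorem polyMult_eq_multiplicity {g : ℚ[X]} (hp : ¬IsUnit p) (hg : g ≠ 0) :
    polyMult p g = multiplicity p g := by
  have hfin := FiniteMultiplicity.of_not_isUnit hp hg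
  have hbound : ∀ k ∈ {k : ℕ | p ^ k ∣ g}, k ≤ multiplicity p g := fun k hk =>
    hfin.le_multiplicity_of_pow_dvd hk
  exact le_antisymm (csSup_le ⟨0, by simp⟩ hbound)
    (le_csSup ⟨_, hbound⟩ (pow_multiplicity_dvd p g))

theorem ordAt_div_algebraMap (hp : Prime p) {A B : ℚ[X]} (hA : A ≠ 0) (hB : B ≠ 0) :
    ordAt p (algebraMap ℚ[X] (RatFunc ℚ) A / algebraMap ℚ[X] (RatFunc ℚ) B)
      = multiplicity p A - multiplicity p B := by
  set f := algebraMap ℚ[X] (RatFunc ℚ) A / algebraMap ℚ[X] (RatFunc ℚ) B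
  have hf : f ≠ 0 := div_ne_zero (RatFunc.algebraMap_ne_zero hA) (RatFunc.algebraMap_ne_zero hB)
  have hnum := RatFunc.num_ne_zero hf
  have hden := RatFunc.denom_ne_zero f
  have hcross : f.num * B = A * f.denom := by
    apply IsFractionRing.injective ℚ[X] (RatFunc ℚ)
    rw [map_mul, map_mul, ← div_eq_div_iff (RatFunc.algebraMap_ne_zero hden)
      (RatFunc.algebraMap_ne_zero hB), RatFunc.num_div_denom]
  have hmult := congrArg (multiplicity p) hcross
  rw [multiplicity_mul hp (.of_not_isUnit hp.not_isUnit (mul_ne_zero hnum hB)),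
    multiplicity_mul hp (.of_not_isUnit hp.not_isUnit (mul_ne_zero hA hden))] at hmult
  rw [ordAt, polyMult_eq_multiplicity hp.not_isUnit hnum,
    polyMult_eq_multiplicity hp.not_isUnit hden]
  omega

theorem ordAt_algebraMap (hp : Prime p) {A : ℚ[X]} (hA : A ≠ 0) :
    ordAt p (algebraMap ℚ[X] (RatFunc ℚ) A) = multiplicity p A := by
  simpa [multiplicity_eq_zero.mpr hp.not_dvd_one] using ordAt_div_algebraMap hp hA one_ne_zero

theorem ordAt_one (hp : Prime p) : ordAt p 1 = 0 := by
  rw [← map_one (algebraMap ℚ[X] (RatFunc ℚ)), ordAt_algebraMap hp one_ne_zero,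
    multiplicity_eq_zero.mpr hp.not_dvd_one, Nat.cast_zero]

theorem ordAt_mul (hp : Prime p) {f g : RatFunc ℚ} (hf : f ≠ 0) (hg : g ≠ 0) :
    ordAt p (f * g) = ordAt p f + ordAt p g := by
  have hfn := RatFunc.num_ne_zero hf
  have hgn := RatFunc.num_ne_zero hg
  have hfd := RatFunc.denom_ne_zero f
  have hgd := RatFunc.denom_ne_zero g
  rw [← RatFunc.num_div_denom f, ← RatFunc.num_div_denom g, div_mul_div_comm, ← map_mul,
    ← map_mul, ordAt_div_algebraMap hp (mul_ne_zero hfn hgn) (mul_ne_zero hfd hgd),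
    ordAt_div_algebraMap hp hfn hfd, ordAt_div_algebraMap hp hgn hgd,
    multiplicity_mul hp (.of_not_isUnit hp.not_isUnit (mul_ne_zero hfn hgn)),
    multiplicity_mul hp (.of_not_isUnit hp.not_isUnit (mul_ne_zero hfd hgd))]
  push_cast
  ring

theorem ordAt_inv (hp : Prime p) {f : RatFunc ℚ} (hf : f ≠ 0) : ordAt p f⁻¹ = -ordAt p f := by
  have h := ordAt_mul hp (inv_ne_zero hf) hf
  rw [inv_mul_cancel₀ hf, ordAt_one hp] at h
  omega

theorem ordAt_zpow (hp : Prime p) {f : RatFunc ℚ} (hf : f ≠ 0) (z : ℤ) :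
    ordAt p (f ^ z) = z * ordAt p f := by
  induction z using Int.induction_on with
  | zero => rw [zpow_zero, ordAt_one hp, zero_mul]
  | succ k ih =>
    rw [zpow_add_one₀ hf, ordAt_mul hp (zpow_ne_zero _ hf) hf, ih]
    ring
  | pred k ih =>
    rw [zpow_sub_one₀ hf, ordAt_mul hp (zpow_ne_zero _ hf) (inv_ne_zero hf), ih, ordAt_inv hp hf]
    ring

theorem ordAt_prod (hp : Prime p) {ι : Type*} (s : Finset ι) {f : ι → RatFunc ℚ}
    (hf : ∀ i ∈ s, f i ≠ 0) : ordAt p (∏ i ∈ s, f i) = ∑ i ∈ s, ordAt p (f i) := by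
  induction s using Finset.cons_induction with
  | empty => rw [prod_empty, sum_empty, ordAt_one hp]
  | cons a s ha ih =>
    rw [prod_cons, sum_cons, ordAt_mul hp (hf a (mem_cons_self a s))
      (prod_ne_zero_iff.mpr fun i hi => hf i (mem_cons_of_mem hi)),
      ih fun i hi => hf i (mem_cons_of_mem hi)]

end OrdAt

section Cyclotomic

local notation "Φ" d:max => algebraMap ℚ[X] (RatFunc ℚ) (cyclotomic d ℚ)

variable {b : ℕ}

theorem cyclotomic_not_dvd_X (hb : 0 < b) : ¬cyclotomic b ℚ ∣ X := fun h =>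
  (cyclotomic.irreducible_rat hb).not_isUnit <| isUnit_of_dvd_one <| by
    simpa using dvd_sub ((h.pow hb.ne').trans dvd_rfl) (cyclotomic.dvd_X_pow_sub_one b ℚ)

theorem ordAt_cyclotomic_C (hb : 0 < b) {ε : ℚ} (hε : ε ≠ 0) :
    ordAt (cyclotomic b ℚ) (RatFunc.C ε) = 0 := by
  rw [← RatFunc.algebraMap_C, ordAt_algebraMap (cyclotomic.irreducible_rat hb).prime
    (C_ne_zero.mpr hε), multiplicity_eq_zero.mpr, Nat.cast_zero]
  exact fun h => (cyclotomic.irreducible_rat hb).not_isUnit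
    (isUnit_of_dvd_unit h (isUnit_C.mpr hε.isUnit))

theorem ordAt_cyclotomic_X (hb : 0 < b) : ordAt (cyclotomic b ℚ) RatFunc.X = 0 := by
  rw [← RatFunc.algebraMap_X, ordAt_algebraMap (cyclotomic.irreducible_rat hb).prime X_ne_zero,
    multiplicity_eq_zero.mpr (cyclotomic_not_dvd_X hb), Nat.cast_zero]

theorem ordAt_cyclotomic_cyclotomic (hb : 0 < b) (d : ℕ) :
    ordAt (cyclotomic b ℚ) (Φ d) = if d = b then 1 else 0 := by
  have hp := (cyclotomic.irreducible_rat hb).prime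
  rw [ordAt_algebraMap hp (cyclotomic_ne_zero d ℚ)]
  split_ifs with hdb
  · rw [hdb, multiplicity_self, Nat.cast_one]
  · rw [multiplicity_eq_zero.mpr, Nat.cast_zero]
    exact fun h => hp.not_isUnit ((cyclotomic.isCoprime_rat (Ne.symm hdb)).isUnit_of_dvd' dvd_rfl h)

def CyclotomicFactorization (N : ℕ) (z : ℕ → ℤ) (f : RatFunc ℚ) : Prop :=
  ∃ (ε : ℚ) (m : ℤ), (ε = 1 ∨ ε = -1) ∧
    f = RatFunc.C ε * RatFunc.X ^ m * ∏ d ∈ Icc 1 N, Φ d ^ z d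

namespace CyclotomicFactorization

variable {N : ℕ} {z z' : ℕ → ℤ} {f g : RatFunc ℚ}

theorem congr (hf : CyclotomicFactorization N z f) (h : ∀ d ∈ Icc 1 N, z d = z' d) :
    CyclotomicFactorization N z' f := by
  obtain ⟨ε, m, hε, rfl⟩ := hf
  exact ⟨ε, m, hε, by rw [prod_congr rfl fun d hd => by rw [h d hd]]⟩

theorem one : CyclotomicFactorization N 0 1 := ⟨1, 0, Or.inl rfl, by simp⟩

theorem mul (hf : CyclotomicFactorization N z f) (hg : CyclotomicFactorization N z' g) :
    CyclotomicFactorization N (z + z') (f * g) := by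
  obtain ⟨ε, m, hε, rfl⟩ := hf
  obtain ⟨ε', m', hε', rfl⟩ := hg
  refine ⟨ε * ε', m + m', by rcases hε with rfl | rfl <;> rcases hε' with rfl | rfl <;> simp, ?_⟩
  simp_rw [Pi.add_apply, zpow_add₀ (RatFunc.X_ne_zero (K := ℚ)),
    zpow_add₀ (RatFunc.algebraMap_ne_zero (cyclotomic_ne_zero _ ℚ)), prod_mul_distrib, map_mul]
  ring

theorem inv (hf : CyclotomicFactorization N z f) : CyclotomicFactorization N (-z) f⁻¹ := by
  obtain ⟨ε, m, hε, rfl⟩ := hf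
  refine ⟨ε, -m, hε, ?_⟩
  have hε_inv : ε⁻¹ = ε := by rcases hε with rfl | rfl <;> norm_num
  simp_rw [mul_inv, ← map_inv₀, hε_inv, ← prod_inv_distrib, ← zpow_neg, Pi.neg_apply]

theorem prod {ι : Type*} (s : Finset ι) {z : ι → ℕ → ℤ} {f : ι → RatFunc ℚ}
    (h : ∀ i ∈ s, CyclotomicFactorization N (z i) (f i)) :
    CyclotomicFactorization N (∑ i ∈ s, z i) (∏ i ∈ s, f i) := by
  induction s using Finset.cons_induction with
  | empty => exact one
  | cons a s ha ih =>
    rw [prod_cons, sum_cons]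
    exact (h a (mem_cons_self a s)).mul (ih fun i hi => h i (mem_cons_of_mem hi))

theorem one_sub_X_zpow {e : ℤ} (he : e ≠ 0) (hN : e.natAbs ≤ N) :
    CyclotomicFactorization N (fun d => if (d : ℤ) ∣ e then 1 else 0) (1 - RatFunc.X ^ e) := by
  have ha : 0 < e.natAbs := Int.natAbs_pos.mpr he
  have hprod : RatFunc.X ^ (e.natAbs : ℤ) - 1
      = ∏ d ∈ Icc 1 N, Φ d ^ (if (d : ℤ) ∣ e then (1 : ℤ) else 0) := by
    rw [zpow_natCast, ← RatFunc.algebraMap_X, ← map_pow, ← map_one (algebraMap ℚ[X] _),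
      ← map_sub, ← prod_cyclotomic_eq_X_pow_sub_one ha ℚ, map_prod]
    refine prod_subset_one_on_sdiff (fun d hd => ?_) (fun d hd => ?_) (fun d hd => ?_)
    · exact mem_Icc.mpr ⟨Nat.pos_of_mem_divisors hd,
        (Nat.le_of_dvd ha (Nat.dvd_of_mem_divisors hd)).trans hN⟩
    · rw [if_neg (fun h => (mem_sdiff.mp hd).2 (Nat.mem_divisors.mpr ⟨Int.natCast_dvd.mp h,
        ha.ne'⟩)), zpow_zero]
    · rw [if_pos (Int.natCast_dvd.mpr (Nat.dvd_of_mem_divisors hd)), zpow_one]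
  rcases he.lt_or_gt with hneg | hpos
  · refine ⟨1, e, Or.inl rfl, ?_⟩
    rw [map_one, one_mul, ← hprod, mul_sub, ← zpow_add₀ (RatFunc.X_ne_zero (K := ℚ)),
      show e + (e.natAbs : ℤ) = 0 by omega, zpow_zero, mul_one]
  · refine ⟨-1, 0, Or.inr rfl, ?_⟩
    rw [← hprod, show (e.natAbs : ℤ) = e by omega, map_neg, map_one, zpow_zero]
    ring

theorem prod_one_sub_X_zpow {ι : Type*} (s : Finset ι) {e : ι → ℤ}
    (he : ∀ i ∈ s, e i ≠ 0 ∧ (e i).natAbs ≤ N) :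
    CyclotomicFactorization N (fun d => #{i ∈ s | (d : ℤ) ∣ e i})
      (∏ i ∈ s, (1 - RatFunc.X ^ e i)) :=
  (prod s fun i hi => one_sub_X_zpow (he i hi).1 (he i hi).2).congr fun d _ => by
    rw [Finset.sum_apply, sum_boole]

theorem cycVal_eq (hf : CyclotomicFactorization N z f) (hb : 0 < b) :
    cycVal b f = if b ≤ N then z b else 0 := by
  obtain ⟨ε, m, hε, rfl⟩ := hf
  have hp := (cyclotomic.irreducible_rat hb).prime
  have hε0 : ε ≠ 0 := by rcases hε with rfl | rfl <;> norm_num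
  have hΦ : ∀ d ∈ Icc 1 N, Φ d ^ z d ≠ 0 := fun d _ =>
    zpow_ne_zero _ (RatFunc.algebraMap_ne_zero (cyclotomic_ne_zero d ℚ))
  have hC : RatFunc.C ε ≠ 0 := by simpa using hε0
  have hX : (RatFunc.X : RatFunc ℚ) ^ m ≠ 0 := zpow_ne_zero _ RatFunc.X_ne_zero
  rw [cycVal_eq_ordAt, ordAt_mul hp (mul_ne_zero hC hX) (prod_ne_zero_iff.mpr hΦ),
    ordAt_mul hp hC hX, ordAt_cyclotomic_C hb hε0, ordAt_zpow hp RatFunc.X_ne_zero, ordAt_cyclotomic_X hb,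
    ordAt_prod hp _ hΦ]
  simp_rw [ordAt_zpow hp (RatFunc.algebraMap_ne_zero (cyclotomic_ne_zero _ ℚ)),
    ordAt_cyclotomic_cyclotomic hb, mul_ite, mul_one, mul_zero, sum_ite_eq', mem_Icc]
  simp [hb.ne', Nat.one_le_iff_ne_zero]

end CyclotomicFactorization

end Cyclotomic

section Pochhammer

variable {r s n : ℤ}

noncomputable def signedCount (P : ℤ → Prop) (n : ℤ) : ℤ :=
  if 0 ≤ n then #{t ∈ Ico 0 n | P t} else -#{t ∈ Ico n 0 | P t}

theorem signedCount_eq_zero {P : ℤ → Prop} (h : ∀ t ∈ Ico (min n 0) (max n 0), ¬P t) :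
    signedCount P n = 0 := by
  unfold signedCount
  split_ifs with hn
  · rw [min_eq_right hn, max_eq_left hn] at h
    rw [filter_false_of_mem h, card_empty, Nat.cast_zero]
  · rw [min_eq_left (by omega), max_eq_right (by omega)] at h
    rw [filter_false_of_mem h, card_empty, Nat.cast_zero, neg_zero]

theorem qPochZ_of_nonneg (hn : 0 ≤ n) :
    qPochZ r s n = ∏ t ∈ Ico 0 n, (1 - RatFunc.X ^ (r + s * t)) := by
  rw [qPochZ, if_pos hn, qPoch]
  refine prod_nbij' (fun j => (j : ℤ)) Int.toNat (fun j hj => ?_) (fun t ht => ?_)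
    (fun j _ => Int.toNat_natCast j) (fun t ht => ?_) (fun _ _ => rfl)
  · simp only [mem_range, mem_Ico] at hj ⊢; omega
  · simp only [mem_range, mem_Ico] at ht ⊢; omega
  · simp only [mem_Ico] at ht; omega

theorem qPochZ_of_neg (hn : n < 0) :
    qPochZ r s n = (∏ t ∈ Ico n 0, (1 - RatFunc.X ^ (r + s * t)))⁻¹ := by
  rw [qPochZ, if_neg hn.not_ge, qPoch]
  congr 1
  refine prod_nbij' (fun j => -1 - (j : ℤ)) (fun t => (-1 - t).toNat) (fun j hj => ?_)
    (fun t ht => ?_) (fun j _ => by omega) (fun t ht => ?_) (fun j _ => by ring_nf)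
  · simp only [mem_range, mem_Ico] at hj ⊢; omega
  · simp only [mem_range, mem_Ico] at ht ⊢; omega
  · simp only [mem_Ico] at ht; omega

theorem cyclotomicFactorization_qPochZ {N : ℕ}
    (h : ∀ t ∈ Ico (min n 0) (max n 0), r + s * t ≠ 0 ∧ (r + s * t).natAbs ≤ N) :
    CyclotomicFactorization N (fun d => signedCount (fun t => (d : ℤ) ∣ r + s * t) n)
      (qPochZ r s n) := by
  unfold signedCount
  by_cases hn : 0 ≤ n
  · rw [min_eq_right hn, max_eq_left hn] at h
    simpa only [if_pos hn, qPochZ_of_nonneg hn] using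
      CyclotomicFactorization.prod_one_sub_X_zpow _ h
  · rw [min_eq_left (by omega), max_eq_right (by omega)] at h
    simp only [if_neg hn, qPochZ_of_neg (not_le.mp hn)]
    exact (CyclotomicFactorization.prod_one_sub_X_zpow _ h).inv.congr fun _ _ => rfl

theorem cyclotomicFactorization_qHypZ {v w : ℕ} {rr : Fin v → ℤ × ℤ} {tt : Fin w → ℤ × ℤ} {N : ℕ}
    (hr : ∀ i, ∀ t ∈ Ico (min n 0) (max n 0),
      (rr i).1 + (rr i).2 * t ≠ 0 ∧ ((rr i).1 + (rr i).2 * t).natAbs ≤ N)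
    (ht : ∀ j, ∀ t ∈ Ico (min n 0) (max n 0),
      (tt j).1 + (tt j).2 * t ≠ 0 ∧ ((tt j).1 + (tt j).2 * t).natAbs ≤ N) :
    CyclotomicFactorization N
      (fun d => ∑ i, signedCount (fun t => (d : ℤ) ∣ (rr i).1 + (rr i).2 * t) n
        - ∑ j, signedCount (fun t => (d : ℤ) ∣ (tt j).1 + (tt j).2 * t) n) (qHypZ rr tt n) := by
  rw [qHypZ, div_eq_mul_inv]
  refine ((CyclotomicFactorization.prod univ fun i _ => cyclotomicFactorization_qPochZ (hr i)).mul
    (CyclotomicFactorization.prod univ fun j _ =>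
      cyclotomicFactorization_qPochZ (ht j)).inv).congr fun d _ => ?_
  simp [sub_eq_add_neg]

end Pochhammer

section Dwork

variable {b : ℕ} {r s k : ℤ}

theorem dvd_of_dwork_witness (hs : s ≠ 0) {θ : ℚ} (hθ : θ.den.Coprime b)
    (h : b * θ - r / s = k) : (b : ℤ) ∣ s * k + r := by
  set q : ℚ := s * θ
  have hq : (b : ℚ) * q = ((s * k + r : ℤ) : ℚ) := by
    have hsQ : (s : ℚ) ≠ 0 := by exact_mod_cast hs
    push_cast; rw [← h]; field_simp; ring
  have hqθ : q.den ∣ θ.den := by simpa using Rat.mul_den_dvd s θ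
  have hqb : q.den ∣ b := by
    rcases b.eq_zero_or_pos with rfl | hb
    · exact dvd_zero _
    have : q = Rat.divInt (s * k + r) b := by
      rw [Rat.divInt_eq_div, eq_div_iff (by exact_mod_cast hb.ne'), mul_comm]; exact_mod_cast hq
    exact Int.natCast_dvd_natCast.mp (this ▸ Rat.den_dvd _ _)
  have hq1 : q.den = 1 := Nat.Coprime.eq_one_of_dvd (hθ.coprime_dvd_left hqθ) hqb
  refine ⟨q.num, ?_⟩
  rw [← Rat.coe_int_num_of_den_eq_one hq1] at hq
  exact_mod_cast hq.symm

theorem exists_dwork_witness (hb : 0 < b) (hs : s ≠ 0) (hcop : IsCoprime s b) :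
    ∃ θ : ℚ, θ.den.Coprime b ∧ ∃ k : ℤ, 0 ≤ k ∧ k < (b : ℤ) ∧ (b : ℚ) * θ - r / s = k := by
  obtain ⟨u, v, huv⟩ := hcop
  have hbZ : (0 : ℤ) < b := by exact_mod_cast hb
  -- `k ≡ -r/s (mod b)`, and the witness is `θ = (s·k + r)/(b·s)`.
  set k := (-r * u) % b
  have hk : (b : ℤ) ∣ s * k + r := by
    have hmod : s * (-r * u) + r ≡ s * k + r [ZMOD b] :=
      ((Int.mod_modEq _ _).symm.mul_left s).add_right r
    have hbase : (b : ℤ) ∣ s * (-r * u) + r := ⟨r * v, by linear_combination -r * huv⟩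
    simpa only [add_sub_cancel] using dvd_add hbase hmod.dvd
  obtain ⟨e, he⟩ := hk
  refine ⟨e / s, ?_, k, Int.emod_nonneg _ hbZ.ne', Int.emod_lt_of_pos _ hbZ, ?_⟩
  · have hden : (((e : ℚ) / s).den : ℤ) ∣ s := by
      rw [← Rat.divInt_eq_div]; exact Rat.den_dvd e s
    exact Nat.Coprime.coprime_dvd_left (Int.natCast_dvd.mp hden)
      (Int.isCoprime_iff_gcd_eq_one.mp ⟨u, v, huv⟩)
  · have heQ : (b : ℚ) * e = s * k + r := by exact_mod_cast he.symm
    have hsQ : (s : ℚ) ≠ 0 := by exact_mod_cast hs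
    field_simp
    linear_combination heQ

theorem dwork_spec (hb : 0 < b) (hs : s ≠ 0) (hcop : IsCoprime s b) :
    ∃ k : ℤ, 0 ≤ k ∧ k < (b : ℤ) ∧ (b : ℚ) * dwork b (r / s) - r / s = k ∧ (b : ℤ) ∣ s * k + r := by
  have hex := exists_dwork_witness (r := r) hb hs hcop
  rw [dwork, dif_pos hex]
  obtain ⟨hden, k, hk0, hkb, hk⟩ := hex.choose_spec
  exact ⟨k, hk0, hkb, hk, dvd_of_dwork_witness hs hden hk⟩

end Dwork

section Delta

theorem signedCount_modEq {m : ℕ} (hm : 0 < m) {k : ℤ} (hk0 : 0 ≤ k) (hkm : k < m) (n : ℤ) :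
    signedCount (· ≡ k [ZMOD m]) n = ⌈((n : ℚ) - k) / m⌉ := by
  have hmQ : (0 : ℚ) < m := by exact_mod_cast hm
  have hkQ : (k : ℚ) < m := by exact_mod_cast hkm
  have hk0Q : (0 : ℚ) ≤ k := by exact_mod_cast hk0
  have hceil : ⌈(-(k : ℚ)) / m⌉ = 0 := by
    rw [Int.ceil_eq_iff, Int.cast_zero, zero_sub, lt_div_iff₀ hmQ, div_le_iff₀ hmQ]
    constructor <;> linarith
  unfold signedCount
  split_ifs with hn
  · have h := Int.Ico_filter_modEq_card 0 n (Int.natCast_pos.mpr hm) k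
    have hnQ : (0 : ℚ) ≤ n := by exact_mod_cast hn
    push_cast at h
    rw [zero_sub, hceil, sub_zero, max_eq_left (Int.ceil_nonneg_of_neg_one_lt (by
      rw [lt_div_iff₀ hmQ]; linarith))] at h
    convert h using 4
  · have h := Int.Ico_filter_modEq_card n 0 (Int.natCast_pos.mpr hm) k
    have hnQ : (n : ℚ) < 0 := by exact_mod_cast not_le.mp hn
    push_cast at h
    rw [zero_sub, hceil, zero_sub, max_eq_left (neg_nonneg.mpr (Int.ceil_le.mpr (by
      rw [Int.cast_zero, div_le_iff₀ hmQ]; linarith)))] at h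
    rw [neg_eq_iff_eq_neg]
    convert h using 4

theorem floor_sub_div_add_one {b : ℕ} (hb : 0 < b) (m : ℤ) {θ : ℚ} (hθ0 : 0 < θ) (hθ1 : θ ≤ 1) :
    ⌊((m : ℚ) - θ) / b⌋ + 1 = ⌈(m : ℚ) / b⌉ := by
  have hbQ : (0 : ℚ) < b := by exact_mod_cast hb
  obtain ⟨hlo, hhi⟩ := Int.ceil_eq_iff.mp (rfl : ⌈(m : ℚ) / b⌉ = _)
  rw [lt_div_iff₀ hbQ] at hlo
  rw [div_le_iff₀ hbQ] at hhi
  have hint : (⌈(m : ℚ) / b⌉ - 1) * b + 1 ≤ m := by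
    have : ((⌈(m : ℚ) / b⌉ - 1) * b : ℤ) < m := by exact_mod_cast hlo
    omega
  have hintQ : ((⌈(m : ℚ) / b⌉ : ℚ) - 1) * b + 1 ≤ m := by exact_mod_cast hint
  rw [← eq_sub_iff_add_eq, Int.floor_eq_iff, le_div_iff₀ hbQ, div_lt_iff₀ hbQ]
  push_cast
  constructor <;> linarith

theorem floor_mul_div_sub_add_one {c b : ℕ} (hc : 0 < c) (hb : 0 < b) {α D : ℚ} {k : ℤ}
    (hD : b * D - α = k) (n : ℤ) :
    ⌊(c : ℝ) * (n / (c * b : ℕ)) - (D : ℝ) - (⌊1 - α⌋ : ℝ) / b⌋ + 1 = ⌈((n : ℚ) - k) / b⌉ := by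
  have hθ0 : 0 < α + ⌊1 - α⌋ := by linarith [Int.lt_floor_add_one (1 - α)]
  have hθ1 : α + ⌊1 - α⌋ ≤ 1 := by linarith [Int.floor_le (1 - α)]
  rw [← Int.cast_sub, ← floor_sub_div_add_one hb (n - k) hθ0 hθ1,
    ← Rat.floor_cast (α := ℝ) ((_ - _) / _)]
  congr 2
  have hbR : (b : ℝ) ≠ 0 := by exact_mod_cast hb.ne'
  have hcR : (c : ℝ) ≠ 0 := by exact_mod_cast hc.ne'
  have hDR : (b : ℝ) * (D : ℝ) - (α : ℝ) = k := by exact_mod_cast hD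
  push_cast
  field_simp
  linear_combination -hDR

theorem dvd_add_mul_iff_modEq {b : ℕ} {r s k : ℤ} (hcop : IsCoprime s b)
    (hk : (b : ℤ) ∣ s * k + r) (t : ℤ) : (b : ℤ) ∣ r + s * t ↔ t ≡ k [ZMOD b] := by
  rw [Int.modEq_iff_dvd, show r + s * t = (s * k + r) - s * (k - t) by ring, dvd_sub_right hk]
  exact ⟨hcop.symm.dvd_of_dvd_mul_left, fun h => h.mul_left s⟩

theorem gcd_div_eq_one_of_dvd {b : ℕ} {r s t : ℤ} (hb : 0 < b) (h : (b : ℤ) ∣ r + s * t) :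
    Int.gcd (s / (Nat.gcd (Int.gcd r s) b : ℤ)) ((b / Nat.gcd (Int.gcd r s) b : ℕ) : ℤ) = 1 := by
  set c := Nat.gcd (Int.gcd r s) b
  set g := Int.gcd (s / (c : ℤ)) ((b / c : ℕ) : ℤ)
  have hc : 0 < c := Nat.gcd_pos_of_pos_right _ hb
  have hcs : (c : ℤ) ∣ s :=
    (Int.natCast_dvd_natCast.mpr (Nat.gcd_dvd_left _ _)).trans (Int.gcd_dvd_right _ _)
  have hgs : ((c * g : ℕ) : ℤ) ∣ s := by
    rw [Nat.cast_mul, ← Int.mul_ediv_cancel' hcs]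
    exact mul_dvd_mul_left _ (Int.gcd_dvd_left _ _)
  have hgb : c * g ∣ b := by
    rw [← Nat.mul_div_cancel' (Nat.gcd_dvd_right (Int.gcd r s) b)]
    exact Nat.mul_dvd_mul_left _ (Int.natCast_dvd_natCast.mp (Int.gcd_dvd_right _ _))
  have hgr : ((c * g : ℕ) : ℤ) ∣ r := by
    simpa using dvd_sub ((Int.natCast_dvd_natCast.mpr hgb).trans h) (hgs.mul_right t)
  have hgc : c * g ∣ c := Nat.dvd_gcd (Int.natCast_dvd_natCast.mp (Int.dvd_coe_gcd hgr hgs)) hgb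
  exact Nat.dvd_one.mp (Nat.dvd_of_mul_dvd_mul_left hc (by rwa [mul_one]))

theorem qdelta_eq_signedCount {b : ℕ} (hb : 0 < b) {r s : ℤ} (hs : s ≠ 0) (n : ℤ) :
    qdelta b r s (n / b) = signedCount (fun t => (b : ℤ) ∣ r + s * t) n := by
  unfold qdelta
  split_ifs with hco
  swap
  · exact (signedCount_eq_zero fun t _ h => hco (gcd_div_eq_one_of_dvd hb h)).symm
  set c := Nat.gcd (Int.gcd r s) b
  have hc : 0 < c := Nat.gcd_pos_of_pos_right _ hb
  obtain ⟨b', hb'⟩ : c ∣ b := Nat.gcd_dvd_right _ _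
  obtain ⟨r', hr'⟩ : (c : ℤ) ∣ r :=
    (Int.natCast_dvd_natCast.mpr (Nat.gcd_dvd_left _ _)).trans (Int.gcd_dvd_left _ _)
  obtain ⟨s', hs'⟩ : (c : ℤ) ∣ s :=
    (Int.natCast_dvd_natCast.mpr (Nat.gcd_dvd_left _ _)).trans (Int.gcd_dvd_right _ _)
  have hcZ : (c : ℤ) ≠ 0 := by exact_mod_cast hc.ne'
  have hbdiv : b / c = b' := by rw [hb', Nat.mul_div_cancel_left _ hc]
  have hsdiv : s / (c : ℤ) = s' := by rw [hs', Int.mul_ediv_cancel_left _ hcZ]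
  rw [hbdiv, hsdiv] at hco
  rw [hbdiv]
  have hb'0 : 0 < b' := Nat.pos_of_mul_pos_left (hb' ▸ hb)
  have hs'0 : s' ≠ 0 := by rintro rfl; simp [hs'] at hs
  have hα : (r : ℚ) / s = r' / s' := by
    rw [hr', hs']; push_cast; exact mul_div_mul_left _ _ (by exact_mod_cast hc.ne')
  obtain ⟨k, hk0, hkb, hD, hdvd⟩ :=
    dwork_spec (r := r') hb'0 hs'0 (Int.isCoprime_iff_gcd_eq_one.mpr hco)
  have hiff : ∀ t : ℤ, (b : ℤ) ∣ r + s * t ↔ t ≡ k [ZMOD b'] := fun t => by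
    rw [hr', hs', hb', Nat.cast_mul, show (c : ℤ) * r' + c * s' * t = c * (r' + s' * t) by ring,
      mul_dvd_mul_iff_left hcZ, dvd_add_mul_iff_modEq (Int.isCoprime_iff_gcd_eq_one.mpr hco) hdvd]
  simp only [hiff]
  rw [hα, hb', signedCount_modEq hb'0 hk0 hkb, floor_mul_div_sub_add_one hc hb'0 hD]

theorem qDeltaFn_eq_sum_signedCount {v w : ℕ} {rr : Fin v → ℤ × ℤ} {tt : Fin w → ℤ × ℤ}
    (hs : ∀ i, (rr i).2 ≠ 0) (hu : ∀ j, (tt j).2 ≠ 0) (n : ℤ) {b : ℕ} (hb : 0 < b) :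
    qDeltaFn b rr tt (n / b) = ∑ i, signedCount (fun t => (b : ℤ) ∣ (rr i).1 + (rr i).2 * t) n
      - ∑ j, signedCount (fun t => (b : ℤ) ∣ (tt j).1 + (tt j).2 * t) n := by
  simp only [qDeltaFn, qdelta_eq_signedCount hb (hs _), qdelta_eq_signedCount hb (hu _)]

end Delta

section Window

variable {n : ℤ}

theorem natAbs_add_mul_le {r s t : ℤ} (ht : t ∈ Ico (min n 0) (max n 0)) :
    (r + s * t).natAbs ≤ r.natAbs + s.natAbs * n.natAbs := by
  have htn : t.natAbs ≤ n.natAbs := by rw [mem_Ico] at ht; omega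
  calc (r + s * t).natAbs ≤ r.natAbs + s.natAbs * t.natAbs := by
        rw [← Int.natAbs_mul]; exact Int.natAbs_add_le _ _
    _ ≤ r.natAbs + s.natAbs * n.natAbs := by gcongr

theorem add_mul_ne_zero_of_mem_window {p : ℤ × ℤ} (hs : p.2 ≠ 0)
    (hnonneg : 0 ≤ n → ¬IsNonPosInt (ratOf p) ∨ (n : ℚ) ≤ -ratOf p)
    (hneg : n < 0 → ¬IsPosInt (ratOf p) ∨ -ratOf p < n) {t : ℤ}
    (ht : t ∈ Ico (min n 0) (max n 0)) : p.1 + p.2 * t ≠ 0 := by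
  intro h0
  have hα : ratOf p = -t := by
    rw [ratOf, div_eq_iff (by exact_mod_cast hs)]
    rw [show p.1 = -(p.2 * t) by omega]
    push_cast; ring
  rcases le_or_gt 0 n with hn | hn
  · rw [min_eq_right hn, max_eq_left hn, mem_Ico] at ht
    have htn : (t : ℚ) < n := by exact_mod_cast ht.2
    rcases hnonneg hn with h | h
    · exact h ⟨-t, by omega, by rw [hα]; push_cast; rfl⟩
    · rw [hα] at h; linarith
  · rw [min_eq_left hn.le, max_eq_right hn.le, mem_Ico] at ht
    have htn : (n : ℚ) ≤ t := by exact_mod_cast ht.1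
    rcases hneg hn with h | h
    · exact h ⟨-t, by omega, by rw [hα]; push_cast; rfl⟩
    · rw [hα] at h; linarith

theorem exponent_ne_zero_and_natAbs_le {p : ℤ × ℤ} (hs : p.2 ≠ 0)
    (hnonneg : 0 ≤ n → ¬IsNonPosInt (ratOf p) ∨ (n : ℚ) ≤ -ratOf p)
    (hneg : n < 0 → ¬IsPosInt (ratOf p) ∨ -ratOf p < n) {N : ℕ}
    (hN : p.1.natAbs + p.2.natAbs * n.natAbs ≤ N) :
    ∀ t ∈ Ico (min n 0) (max n 0), p.1 + p.2 * t ≠ 0 ∧ (p.1 + p.2 * t).natAbs ≤ N :=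
  fun _ ht => ⟨add_mul_ne_zero_of_mem_window hs hnonneg hneg ht, (natAbs_add_mul_le ht).trans hN⟩

theorem signedCount_dvd_eq_zero {r s : ℤ} {d N : ℕ} (hd : N < d)
    (h : ∀ t ∈ Ico (min n 0) (max n 0), r + s * t ≠ 0 ∧ (r + s * t).natAbs ≤ N) :
    signedCount (fun t => (d : ℤ) ∣ r + s * t) n = 0 :=
  signedCount_eq_zero fun t ht hdvd => by
    have := Nat.le_of_dvd (Int.natAbs_pos.mpr (h t ht).1) (Int.natCast_dvd.mp hdvd)
    have := (h t ht).2
    omega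

end Window

/-- Corollary 3.9: cyclotomic valuations of q-hypergeometric terms and the
factorization `Q_{𝐫,𝐭}(q;n) = ε·q^m·∏_b φ_b(q)^{Δ_b^{𝐫,𝐭}(n/b)}`. -/
theorem cycVal_qHypZ {v w : ℕ} (rr : Fin v → ℤ × ℤ) (tt : Fin w → ℤ × ℤ)
    (hs : ∀ i, (rr i).2 ≠ 0) (hu : ∀ j, (tt j).2 ≠ 0) (n : ℤ)
    (hwf : n < 0 → ∀ i, ¬ IsPosInt (ratOf (rr i)) ∨ -(ratOf (rr i)) < (n : ℚ))
    (hwf' : 0 ≤ n → ∀ j, ¬ IsNonPosInt (ratOf (tt j)) ∨ (n : ℚ) ≤ -(ratOf (tt j)))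
    (hnz : 0 ≤ n → ∀ i, ¬ IsNonPosInt (ratOf (rr i)) ∨ (n : ℚ) ≤ -(ratOf (rr i)))
    (hnz' : n < 0 → ∀ j, ¬ IsPosInt (ratOf (tt j)) ∨ -(ratOf (tt j)) < (n : ℚ)) :
    (∀ b : ℕ, 0 < b → cycVal b (qHypZ rr tt n) = qDeltaFn b rr tt ((n : ℝ) / (b : ℝ))) ∧
      (∃ N : ℕ, ∀ b : ℕ, N ≤ b → qDeltaFn b rr tt ((n : ℝ) / (b : ℝ)) = 0) ∧
      (∃ (ε : ℚ) (m : ℤ) (N : ℕ), (ε = 1 ∨ ε = -1) ∧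
        (∀ b : ℕ, N < b → qDeltaFn b rr tt ((n : ℝ) / (b : ℝ)) = 0) ∧
        qHypZ rr tt n = RatFunc.C ε * RatFunc.X ^ m *
          ∏ b ∈ Finset.Icc 1 N,
            (algebraMap (Polynomial ℚ) (RatFunc ℚ) (cyclotomic b ℚ)) ^
              (qDeltaFn b rr tt ((n : ℝ) / (b : ℝ)))) := by
  obtain ⟨N₁, hN₁⟩ := Finite.exists_le fun i => (rr i).1.natAbs + (rr i).2.natAbs * n.natAbs
  obtain ⟨N₂, hN₂⟩ := Finite.exists_le fun j => (tt j).1.natAbs + (tt j).2.natAbs * n.natAbs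
  set N := max N₁ N₂
  have hexp_r i := exponent_ne_zero_and_natAbs_le (hs i) (hnz · i) (hwf · i)
    ((hN₁ i).trans (le_max_left N₁ N₂))
  have hexp_t j := exponent_ne_zero_and_natAbs_le (hu j) (hwf' · j) (hnz' · j)
    ((hN₂ j).trans (le_max_right N₁ N₂))
  have hvanish : ∀ b, N < b → qDeltaFn b rr tt (n / b) = 0 := fun b hb => by
    simp [qDeltaFn_eq_sum_signedCount hs hu n (by omega : 0 < b),
      signedCount_dvd_eq_zero hb (hexp_r _), signedCount_dvd_eq_zero hb (hexp_t _)]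
  have hform : CyclotomicFactorization N (fun b => qDeltaFn b rr tt (n / b)) (qHypZ rr tt n) :=
    (cyclotomicFactorization_qHypZ hexp_r hexp_t).congr fun b hb =>
      (qDeltaFn_eq_sum_signedCount hs hu n (mem_Icc.mp hb).1).symm
  refine ⟨fun b hb => ?_, ⟨N + 1, fun b hb => hvanish b (by omega)⟩, ?_⟩
  · rw [hform.cycVal_eq hb]
    split_ifs with hbN
    · rfl
    · exact (hvanish b (by omega)).symm
  · obtain ⟨ε, m, hε, hQ⟩ := hform
    exact ⟨ε, m, N, hε, hvanish, hQ⟩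
end

section
/- Let 𝐫 = ((r_1,s_1),…,(r_v,s_v)) and 𝐭 = ((t_1,u_1),…,(t_w,u_w)) be vectors of pairs of integers with all s_i, u_j ≠ 0. Then for every positive integer b, every integer k, and every real number x, one has Δ_b^{𝐫,𝐭}(x + k) = Δ_b^{𝐫,𝐭}(x) + k·Δ_b^{𝐫,𝐭}(1). -/
open Polynomial
open scoped Classical

/-!
With `C := D_{b'}(α) + ⌊1 - α⌋/b'`, the defining property of the Dwork map puts `C` in `(0, 1]`.
Hence `δ_b(r, s, x) = ⌊c·x - C⌋ + 1` satisfies `δ_b(r, s, 1) = c` and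
`δ_b(r, s, x + k) = δ_b(r, s, x) + c·k`, and `Δ_b` inherits this additivity from its summands.
-/

theorem Rat.den_intCast_div_intCast_dvd (a b : ℤ) : ((a : ℚ) / b).den ∣ b.natAbs := by
  rw [← Rat.divInt_eq_div]
  exact Int.natAbs_dvd_natAbs.mpr (Rat.den_dvd a b)

theorem exists_dwork_spec {b : ℕ} (hb : 0 < b) {α : ℚ} (hα : α.den.Coprime b) :
    ∃ θ : ℚ, θ.den.Coprime b ∧ ∃ k : ℤ, 0 ≤ k ∧ k < (b : ℤ) ∧ (b : ℚ) * θ - α = k := by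
  obtain ⟨u, v, huv⟩ := Nat.isCoprime_iff_coprime.mpr hα
  -- With `u ≡ den⁻¹ (mod b)` and `k ≡ -num·u (mod b)`, `b ∣ num + k·den`, so `(α + k)/b` still has
  -- denominator dividing `den`.
  set q := -α.num * u / b
  refine ⟨((α.num * v - q * α.den : ℤ) : ℚ) / (α.den : ℤ),
    Nat.Coprime.coprime_dvd_left (Rat.den_intCast_div_intCast_dvd _ _) hα,
    -α.num * u % b, Int.emod_nonneg _ (by positivity), Int.emod_lt_of_pos _ (by positivity), ?_⟩
  have hden : (α.den : ℚ) ≠ 0 := by exact_mod_cast α.den_ne_zero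
  have hmod : ((-α.num * u % b : ℤ) : ℚ) = -α.num * u - b * q := by
    exact_mod_cast Int.emod_def _ _
  have huv' : (u : ℚ) * α.den + v * b = 1 := by exact_mod_cast huv
  have hnum : (α.num : ℚ) = α * α.den := (Rat.mul_den_eq_num α).symm
  rw [hmod]
  push_cast
  field_simp
  linear_combination (α.num : ℚ) * huv' + hnum

theorem dwork_spec_s11 {b : ℕ} (hb : 0 < b) {α : ℚ} (hα : α.den.Coprime b) :
    ∃ k : ℤ, 0 ≤ k ∧ k < (b : ℤ) ∧ (b : ℚ) * dwork b α - α = k := by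
  have hex := exists_dwork_spec hb hα
  rw [dwork, dif_pos hex]
  exact hex.choose_spec.2

theorem dwork_add_floor_div_mem_Ioc {b : ℕ} (hb : 0 < b) {α : ℚ} (hα : α.den.Coprime b) :
    dwork b α + (⌊1 - α⌋ : ℚ) / b ∈ Set.Ioc 0 1 := by
  obtain ⟨k, hk0, hkb, hk⟩ := dwork_spec_s11 hb hα
  have hbQ : (0 : ℚ) < b := by exact_mod_cast hb
  have hkb' : (k : ℚ) + 1 ≤ b := by exact_mod_cast hkb
  have hk0' : (0 : ℚ) ≤ k := by exact_mod_cast hk0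
  have hfl := Int.floor_le (1 - α)
  have hfl' := Int.lt_floor_add_one (1 - α)
  have hsum : dwork b α + (⌊1 - α⌋ : ℚ) / b = (k + α + ⌊1 - α⌋) / b := by
    field_simp
    linear_combination hk
  rw [hsum, Set.mem_Ioc, div_le_one hbQ]
  exact ⟨div_pos (by linarith) hbQ, by linarith⟩

theorem floor_mul_sub_add_one_add_intCast (c : ℤ) {C : ℝ} (hC : C ∈ Set.Ioc 0 1) (x : ℝ)
    (k : ℤ) : ⌊c * (x + k) - C⌋ + 1 = ⌊c * x - C⌋ + 1 + k * (⌊c * 1 - C⌋ + 1) := by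
  have hone : ⌊c * 1 - C⌋ = c - 1 := by
    rw [Int.floor_eq_iff]
    push_cast
    constructor <;> linarith [hC.1, hC.2]
  have hshift : c * (x + k) - C = c * x - C + ((c * k : ℤ) : ℝ) := by
    push_cast
    ring
  rw [hone, hshift, Int.floor_add_intCast]
  ring

theorem qdelta_add_intCast {b : ℕ} (hb : 0 < b) (r s k : ℤ) (x : ℝ) :
    qdelta b r s (x + k) = qdelta b r s x + k * qdelta b r s 1 := by
  set c := Nat.gcd (Int.gcd r s) b
  set b' := b / c
  unfold qdelta
  split_ifs with h
  case neg => ring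
  have hc : 0 < c := Nat.gcd_pos_of_pos_right _ hb
  have hb' : 0 < b' := Nat.div_pos (Nat.le_of_dvd hb (Nat.gcd_dvd_right _ _)) hc
  have hcr : (c : ℤ) ∣ r :=
    (Int.natCast_dvd_natCast.mpr (Nat.gcd_dvd_left _ _)).trans (Int.gcd_dvd_left r s)
  have hcs : (c : ℤ) ∣ s :=
    (Int.natCast_dvd_natCast.mpr (Nat.gcd_dvd_left _ _)).trans (Int.gcd_dvd_right r s)
  have hcop : ((r : ℚ) / s).den.Coprime b' := by
    have hc' : ((c : ℤ) : ℚ) ≠ 0 := by exact_mod_cast hc.ne'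
    rw [← div_div_div_cancel_right₀ hc', ← Rat.intCast_div _ _ hcr, ← Rat.intCast_div _ _ hcs]
    exact Nat.Coprime.coprime_dvd_left (Rat.den_intCast_div_intCast_dvd _ _) h
  have hC : ((dwork b' (r / s) : ℚ) : ℝ) + ((⌊1 - (r : ℚ) / s⌋ : ℤ) : ℝ) / (b' : ℝ)
      ∈ Set.Ioc 0 1 := by
    have := dwork_add_floor_div_mem_Ioc hb' hcop
    rw [Set.mem_Ioc] at this ⊢
    exact ⟨by exact_mod_cast this.1, by exact_mod_cast this.2⟩
  have hfloor := floor_mul_sub_add_one_add_intCast c hC x k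
  push_cast at hfloor
  simp only [sub_sub]
  exact hfloor

theorem qDeltaFn_add_int_general {v w : ℕ} (rr : Fin v → ℤ × ℤ) (tt : Fin w → ℤ × ℤ)
    (b : ℕ) (hb : 0 < b) (k : ℤ) (x : ℝ) :
    qDeltaFn b rr tt (x + (k : ℝ)) = qDeltaFn b rr tt x + k * qDeltaFn b rr tt 1 := by
  simp only [qDeltaFn, qdelta_add_intCast hb, Finset.sum_add_distrib, ← Finset.mul_sum]
  ring

/-- Lemma 4.4, first part: `Δ_b(x + k) = Δ_b(x) + k·Δ_b(1)`. -/
theorem qDeltaFn_add_int {v w : ℕ} (rr : Fin v → ℤ × ℤ) (tt : Fin w → ℤ × ℤ)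
    (hs : ∀ i, (rr i).2 ≠ 0) (hu : ∀ j, (tt j).2 ≠ 0)
    (b : ℕ) (hb : 0 < b) (k : ℤ) (x : ℝ) :
    qDeltaFn b rr tt (x + (k : ℝ)) = qDeltaFn b rr tt x + k * qDeltaFn b rr tt 1 :=
  qDeltaFn_add_int_general rr tt b hb k x
end

section
/- Let 𝐫 = ((r_1,s_1),…,(r_v,s_v)) and 𝐭 = ((t_1,u_1),…,(t_w,u_w)) be vectors of pairs of integers with all s_i, u_j ≠ 0. Then there exists a positive integer B such that for every integer b ≥ B, any two distinct points of discontinuity of the step function Δ_b^{𝐫,𝐭} : ℝ → ℝ are at distance at least 1/b from each other. -/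
/-!
Each summand `δ_b(r, s, ·)` is either `0` or `x ↦ ⌊c·x − θ⌋ + 1` with `θ = D_{b'}(r/s) + ⌊1 − r/s⌋/b'`,
and the denominator of `D_{b'}(r/s)` divides `s`. Hence it can only jump at points
`x = n/(s·c) + ⌊1 − r/s⌋/b`, and with `N = ∏ |s_i| · ∏ |u_j|` every jump of `Δ_b` lies in
`N⁻²ℤ + A/b` with `|A| ≤ C` for a bound `C` independent of `b`. Two jumps therefore differ by
`M/N² + E/b` with `|E| ≤ 2C`: if `M = 0` this is at least `1/b` in absolute value, and otherwise
at least `1/N² − 2C/b ≥ 1/b` as soon as `b ≥ N²(2C + 1)`.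
-/

open Polynomial
open scoped Classical

theorem continuousAt_floor {α : Type*} [Ring α] [LinearOrder α] [FloorRing α]
    [TopologicalSpace α] [OrderClosedTopology α] {x : α} (h : x ≠ ⌊x⌋) :
    ContinuousAt (fun t : α => (⌊t⌋ : α)) x :=
  (continuousOn_floor ⌊x⌋).continuousAt <|
    Ico_mem_nhds ((Int.floor_le _).lt_of_ne h.symm) (Int.lt_floor_add_one _)

theorem ContinuousAt.intCast_floor {α X : Type*} [Ring α] [LinearOrder α] [FloorRing α]
    [TopologicalSpace α] [OrderClosedTopology α] [TopologicalSpace X] {f : X → α} {x : X}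
    (hf : ContinuousAt f x) (h : f x ≠ ⌊f x⌋) : ContinuousAt (fun z => (⌊f z⌋ : α)) x :=
  (continuousAt_floor h).comp hf

theorem den_dwork_dvd (b : ℕ) (α : ℚ) : (dwork b α).den ∣ α.den := by
  unfold dwork
  split_ifs with h
  · obtain ⟨hcop, k, -, hkb, heq⟩ := h.choose_spec
    have hb : b ≠ 0 := by rintro rfl; omega
    have hθ : h.choose = (α + k) * (b : ℚ)⁻¹ := by
      rw [← heq]; field_simp; ring
    have hden : h.choose.den ∣ α.den * b := by
      have := Rat.mul_den_dvd (α + k) (b : ℚ)⁻¹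
      rwa [Rat.add_intCast_den, Rat.inv_natCast_den_of_pos (Nat.pos_of_ne_zero hb), ← hθ] at this
    exact hcop.dvd_of_dvd_mul_right hden
  · simp

theorem exists_mul_dwork_div_eq_intCast (b : ℕ) {r s : ℤ} :
    ∃ m : ℤ, (s : ℚ) * dwork b (r / s) = m := by
  set θ := dwork b (r / s)
  have hdvd : (θ.den : ℤ) ∣ s := by
    refine (Int.natCast_dvd_natCast.2 (den_dwork_dvd b _)).trans ?_
    rw [← Rat.divInt_eq_div]
    exact Rat.den_dvd r s
  obtain ⟨t, ht⟩ := hdvd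
  refine ⟨t * θ.num, ?_⟩
  calc (s : ℚ) * θ = t * (θ.den * θ) := by rw [ht]; push_cast; ring
    _ = _ := by rw [Rat.den_mul_eq_num]; push_cast; rfl

theorem exists_intCast_eq_of_not_continuousAt_qdelta {b : ℕ} {r s : ℤ} {x : ℝ}
    (h : ¬ ContinuousAt (fun z : ℝ => (qdelta b r s z : ℝ)) x) :
    ∃ K : ℤ, (Nat.gcd (Int.gcd r s) b : ℝ) * x
        - ((dwork (b / Nat.gcd (Int.gcd r s) b) ((r : ℚ) / (s : ℚ)) : ℚ) : ℝ)
        - ((⌊1 - (r : ℚ) / (s : ℚ)⌋ : ℤ) : ℝ) / ((b / Nat.gcd (Int.gcd r s) b : ℕ) : ℝ) = K := by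
  by_contra! hK
  apply h
  unfold qdelta
  split_ifs
  · push_cast
    refine ContinuousAt.add ?_ continuousAt_const
    exact ContinuousAt.intCast_floor (by fun_prop) (hK _)
  · exact continuousAt_const

theorem exists_eq_div_sq_add_div_of_not_continuousAt_qdelta {b N : ℕ} {r s : ℤ} {x : ℝ}
    (hb : 0 < b) (hN : 0 < N) (hsN : s.natAbs ∣ N)
    (h : ¬ ContinuousAt (fun z : ℝ => (qdelta b r s z : ℝ)) x) :
    ∃ n : ℤ, x = n / (N : ℝ) ^ 2 + ((⌊1 - (r : ℚ) / (s : ℚ)⌋ : ℤ) : ℝ) / b := by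
  obtain ⟨K, hK⟩ := exists_intCast_eq_of_not_continuousAt_qdelta h
  set c := Nat.gcd (Int.gcd r s) b
  obtain ⟨m, hm⟩ := exists_mul_dwork_div_eq_intCast (b / c) (r := r) (s := s)
  obtain ⟨e, he⟩ : (c : ℤ) ∣ s :=
    Int.natCast_dvd.2 ((Nat.gcd_dvd_left _ _).trans (Nat.gcd_dvd_right _ _))
  obtain ⟨t, ht⟩ : s ∣ (N : ℤ) := Int.natAbs_dvd_natAbs.1 (by simpa using hsN)
  have hc : 0 < c := Nat.gcd_pos_of_pos_right _ hb
  have hbc : ((b / c : ℕ) : ℝ) * c = b := by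
    exact_mod_cast Nat.div_mul_cancel (Nat.gcd_dvd_right _ _)
  have hmR : (s : ℝ) * (dwork (b / c) (r / s) : ℝ) = m := by exact_mod_cast hm
  have hNR : (N : ℝ) = s * t := by exact_mod_cast ht
  have hsR : (s : ℝ) = c * e := by exact_mod_cast he
  have hb' : ((b / c : ℕ) : ℝ) ≠ 0 := by
    rintro h0; rw [h0, zero_mul] at hbc; exact hb.ne' (by exact_mod_cast hbc.symm)
  have hst : (s : ℝ) * t ≠ 0 := hNR ▸ by positivity
  have hs0 : (s : ℝ) ≠ 0 := left_ne_zero_of_mul hst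
  have ht0 : (t : ℝ) ≠ 0 := right_ne_zero_of_mul hst
  -- `x = (K·s + m)/(s·c) + A/b` and `N² = s·c·(e·t²)`
  refine ⟨(K * s + m) * e * t ^ 2, ?_⟩
  rw [← hbc, hNR]
  push_cast
  field_simp at hK ⊢
  linear_combination (s : ℝ) ^ 2 * hK + (s : ℝ) * ((b / c : ℕ) : ℝ) * hmR
    + ((b / c : ℕ) : ℝ) * (K * s + m) * hsR

theorem one_div_le_abs_div_add_div {N b C : ℕ} {M E : ℤ} (hN : 0 < N) (hb : N * (C + 1) ≤ b)
    (hE : |E| ≤ C) (hne : (M : ℝ) / N + E / b ≠ 0) : 1 / (b : ℝ) ≤ |(M : ℝ) / N + E / b| := by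
  have hbR : (0 : ℝ) < b := by exact_mod_cast (Nat.mul_pos hN C.succ_pos).trans_le hb
  have hNR : (0 : ℝ) < N := by exact_mod_cast hN
  rcases eq_or_ne M 0 with rfl | hM
  · have hE0 : E ≠ 0 := by rintro rfl; simp at hne
    rw [Int.cast_zero, zero_div, zero_add, abs_div, abs_of_pos hbR]
    gcongr
    exact_mod_cast Int.one_le_abs hE0
  · have hbN : (N : ℝ) * (C + 1) ≤ b := by exact_mod_cast hb
    calc 1 / (b : ℝ) ≤ 1 / N - C / b := by
          rw [le_sub_iff_add_le, ← add_div, div_le_div_iff₀ hbR hNR]; linarith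
      _ ≤ |(M : ℝ) / N| - |(E : ℝ) / b| := by
          rw [abs_div, abs_div, Nat.abs_cast, Nat.abs_cast]
          gcongr
          · exact_mod_cast Int.one_le_abs hM
          · exact_mod_cast hE
      _ ≤ |(M : ℝ) / N + E / b| := abs_sub_abs_le_abs_add _ _

def pairsOf {v w : ℕ} (rr : Fin v → ℤ × ℤ) (tt : Fin w → ℤ × ℤ) : Finset (ℤ × ℤ) :=
  Finset.univ.image rr ∪ Finset.univ.image tt

theorem exists_not_continuousAt_qdelta_of_not_continuousAt_qDeltaFn {v w b : ℕ}
    {rr : Fin v → ℤ × ℤ} {tt : Fin w → ℤ × ℤ} {x : ℝ}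
    (h : ¬ ContinuousAt (fun z : ℝ => (qDeltaFn b rr tt z : ℝ)) x) :
    ∃ p ∈ pairsOf rr tt, ¬ ContinuousAt (fun z : ℝ => (qdelta b p.1 p.2 z : ℝ)) x := by
  contrapose! h
  simp only [qDeltaFn, Int.cast_sub, Int.cast_sum]
  exact (tendsto_finsetSum _ fun i _ => h _ (Finset.mem_union_left _ (by simp))).sub
    (tendsto_finsetSum _ fun j _ => h _ (Finset.mem_union_right _ (by simp)))

/-- Lemma 4.4, second part: for `b` large enough, distinct discontinuity
points of `Δ_b^{𝐫,𝐭}` are at distance at least `1/b`. -/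
theorem qDeltaFn_jumps_separated {v w : ℕ} (rr : Fin v → ℤ × ℤ) (tt : Fin w → ℤ × ℤ)
    (hs : ∀ i, (rr i).2 ≠ 0) (hu : ∀ j, (tt j).2 ≠ 0) :
    ∃ B : ℕ, 0 < B ∧ ∀ b : ℕ, B ≤ b →
      ∀ x y : ℝ, ¬ ContinuousAt (fun z : ℝ => (qDeltaFn b rr tt z : ℝ)) x →
        ¬ ContinuousAt (fun z : ℝ => (qDeltaFn b rr tt z : ℝ)) y → x ≠ y →
          1 / (b : ℝ) ≤ |x - y| := by
  set P := pairsOf rr tt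
  set N := ∏ p ∈ P, p.2.natAbs
  set C := P.sup fun p => (⌊1 - (p.1 : ℚ) / p.2⌋).natAbs
  have hN : 0 < N := Finset.prod_pos fun p hp => Int.natAbs_pos.2 <| by
    simp only [P, pairsOf, Finset.mem_union, Finset.mem_image, Finset.mem_univ, true_and] at hp
    rcases hp with ⟨i, rfl⟩ | ⟨j, rfl⟩
    exacts [hs i, hu j]
  have hjump : ∀ b, 0 < b → ∀ x, ¬ ContinuousAt (fun z : ℝ => (qDeltaFn b rr tt z : ℝ)) x →
      ∃ n A : ℤ, |A| ≤ C ∧ x = n / (N : ℝ) ^ 2 + A / b := by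
    intro b hb x hx
    obtain ⟨p, hp, hpx⟩ := exists_not_continuousAt_qdelta_of_not_continuousAt_qDeltaFn hx
    obtain ⟨n, hn⟩ := exists_eq_div_sq_add_div_of_not_continuousAt_qdelta hb hN
      (Finset.dvd_prod_of_mem _ hp) hpx
    refine ⟨n, _, ?_, hn⟩
    rw [Int.abs_eq_natAbs, Nat.cast_le]
    exact Finset.le_sup (f := fun p : ℤ × ℤ => (⌊1 - (p.1 : ℚ) / p.2⌋).natAbs) hp
  refine ⟨N ^ 2 * (2 * C + 1), by positivity, fun b hb x y hx hy hxy => ?_⟩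
  have hb0 : 0 < b := (by positivity : 0 < N ^ 2 * (2 * C + 1)).trans_le hb
  obtain ⟨n, A, hA, rfl⟩ := hjump b hb0 x hx
  obtain ⟨n', A', hA', rfl⟩ := hjump b hb0 y hy
  have hsep := one_div_le_abs_div_add_div (M := n - n') (E := A - A') (pow_pos hN 2)
    (by exact_mod_cast hb) (by grind) (by push_cast; contrapose! hxy; linear_combination hxy)
  convert hsep using 2
  push_cast
  ring
end

section
/- For i ∈ {1, 2}, let r_i and s_i be integers with s_i ≠ 0 and α_i := r_i/s_i ∉ ℤ_{≤0}. Set d := lcm(s_1, s_2) and let b be an integer with b > max(|r_1|, |r_2|, d·|⌊1−α_1⌋ − ⌊1−α_2⌋|). Set c_i := gcd(r_i, s_i, b) and assume there exists an integer e_i with 1 ≤ e_i ≤ d and b·e_i ≡ c_i (mod s_i) (so that b/c_i is coprime to the denominator of α_i and D_{b/c_i}(α_i) is defined). Let k_i ∈ {0, …, c_i − 1} and let a be a positive integer. Set γ_i := (D_{b/c_i}(α_i) + k_i)/c_i + ⌊1−α_i⌋/b and Γ_i := (⟨e_i·α_i⟩ + k_i)/c_i − ⌊1−a·α_i⌋.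 Then γ_1 ≤ γ_2 if and only if Γ_1 ⪯ Γ_2; moreover, if Γ_1 = Γ_2 then α_1 = α_2. -/
open Polynomial
open scoped Classical

/-!
Write `G_i := (⟨e_i α_i⟩ + k_i)/c_i ∈ (0, 1]`. The congruence `b e_i ≡ c_i (mod s_i)` and
`|r_i| < b` force `D_{b/c_i}(α_i) = ⟨e_i α_i⟩`, so that `γ_i = G_i + ⌊1 - α_i⌋/b`, while `⟨Γ_i⟩ = G_i`.
Since `d G_i ∈ ℤ`, distinct `G_i` differ by at least `1/d`, which the bound on `b` makes larger
than the perturbations `⌊1 - α_i⌋/b`; so both orders are decided by the `G_i` unless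
`G_1 = G_2`. In that case `b G_i - α_i ∈ ℤ` gives `α_1 - α_2 ∈ ℤ`, and both tie-breaks
(`⌊1 - α_i⌋` for `≤`, `⌊1 - a α_i⌋` for `⪯`) compare `α_2 ≤ α_1`.
-/

theorem cangle_eq_add_floor_one_sub (x : ℝ) : cangle x = x + ⌊1 - x⌋ := by
  unfold cangle
  split_ifs with hx
  · obtain ⟨m, rfl⟩ := hx
    rw [show (1 : ℝ) - m = ((1 - m : ℤ) : ℝ) by push_cast; ring, Int.floor_intCast]
    push_cast
    ring
  · have hlt : (⌊x⌋ : ℝ) < x := (Int.floor_le x).lt_of_ne fun h => hx ⟨⌊x⌋, h.symm⟩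
    have hfloor : ⌊1 - x⌋ = -⌊x⌋ := by
      rw [Int.floor_eq_iff]
      push_cast
      constructor <;> linarith [Int.sub_one_lt_floor x]
    rw [hfloor, ← Int.self_sub_floor]
    push_cast
    ring

theorem cangle_sub_intCast (x : ℝ) (m : ℤ) : cangle (x - m) = cangle x := by
  rw [cangle_eq_add_floor_one_sub, cangle_eq_add_floor_one_sub, sub_sub_eq_add_sub,
    ← sub_add_eq_add_sub, Int.floor_add_intCast]
  push_cast
  ring

theorem cangle_of_pos_of_le_one {x : ℝ} (h0 : 0 < x) (h1 : x ≤ 1) : cangle x = x := by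
  rw [cangle_eq_add_floor_one_sub, Int.floor_eq_zero_iff.mpr ⟨by linarith, by linarith⟩]
  simp

/-- `⟨q⟩` for rational `q`: the representative of `q` modulo `ℤ` in `(0, 1]`. -/
def cangleRat (q : ℚ) : ℚ := q + ⌊1 - q⌋

theorem cangle_ratCast (q : ℚ) : cangle q = cangleRat q := by
  rw [cangle_eq_add_floor_one_sub, cangleRat, ← Rat.cast_one, ← Rat.cast_sub, Rat.floor_cast]
  push_cast
  ring

theorem cangleRat_pos (q : ℚ) : 0 < cangleRat q := by
  have := Int.sub_one_lt_floor (1 - q)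
  rw [cangleRat]
  linarith

theorem cangleRat_le_one (q : ℚ) : cangleRat q ≤ 1 := by
  have := Int.floor_le (1 - q)
  rw [cangleRat]
  linarith

theorem den_mul_cangleRat_mul (α : ℚ) (e : ℤ) :
    (α.den : ℚ) * cangleRat (e * α) = (e * α.num + α.den * ⌊1 - e * α⌋ : ℤ) := by
  rw [cangleRat]
  push_cast
  linear_combination (e : ℚ) * Rat.mul_den_eq_num α

theorem dwork_eq_of_coprime {b : ℕ} {α θ : ℚ} (hcop : θ.den.Coprime b) {k : ℤ} (hk0 : 0 ≤ k)
    (hkb : k < b) (hθ : b * θ - α = k) : dwork b α = θ := by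
  have hex : ∃ θ' : ℚ, θ'.den.Coprime b ∧ ∃ k' : ℤ, 0 ≤ k' ∧ k' < b ∧ b * θ' - α = k' :=
    ⟨θ, hcop, k, hk0, hkb, hθ⟩
  rw [dwork, dif_pos hex]
  obtain ⟨hcop', k', hk0', hkb', hθ'⟩ := hex.choose_spec
  set θ' := hex.choose
  have hdiff : (b : ℚ) * (θ' - θ) = (k' - k : ℤ) := by push_cast; linarith
  have hb : (b : ℚ) ≠ 0 := Nat.cast_ne_zero.mpr (by omega)
  -- `θ' - θ` has denominator dividing `b` and coprime to `b`, hence is an integer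
  have hden_dvd : (θ' - θ).den ∣ b := by
    have h := Rat.den_dvd (k' - k) b
    rwa [← Rat.intCast_div_eq_divInt, ← hdiff, Int.cast_natCast, mul_div_cancel_left₀ _ hb,
      Int.natCast_dvd_natCast] at h
  have hden : (θ' - θ).den = 1 :=
    ((hcop'.mul_left hcop).coprime_dvd_left (Rat.sub_den_dvd _ _)).eq_one_of_dvd hden_dvd
  have hdvd : (b : ℤ) ∣ k' - k := by
    refine ⟨(θ' - θ).num, ?_⟩
    rw [← (Rat.den_eq_one_iff _).mp hden] at hdiff
    exact_mod_cast hdiff.symm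
  have hkk : k' - k = 0 := Int.eq_zero_of_abs_lt_dvd hdvd (by rw [abs_lt]; omega)
  rw [hkk, Int.cast_zero, mul_eq_zero, sub_eq_zero] at hdiff
  exact hdiff.resolve_left hb

theorem mul_cangleRat_mul_sub_eq {b : ℕ} {α : ℚ} {e q : ℤ} (hq : b * e - 1 = α.den * q) :
    (b : ℚ) * cangleRat (e * α) - α = (q * α.num + b * ⌊1 - e * α⌋ : ℤ) := by
  have hq' : (b : ℚ) * e - 1 = α.den * q := by exact_mod_cast hq
  rw [cangleRat]
  push_cast
  linear_combination α * hq' + (q : ℚ) * Rat.mul_den_eq_num α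

theorem dwork_eq_cangleRat {b : ℕ} {α : ℚ} {e : ℤ} (hden : (α.den : ℤ) ∣ b * e - 1)
    (hnum : |α.num| < b) (hα : ¬ IsNonPosInt α) : dwork b α = cangleRat (e * α) := by
  obtain ⟨q, hq⟩ := hden
  set F := cangleRat (e * α)
  have hK := mul_cangleRat_mul_sub_eq hq
  have hP := den_mul_cangleRat_mul α e
  set K : ℤ := q * α.num + b * ⌊1 - e * α⌋
  set P : ℤ := e * α.num + α.den * ⌊1 - e * α⌋
  have ht : (0 : ℚ) < α.den := by exact_mod_cast α.den_pos
  have hPK : (α.den : ℤ) * K = b * P - α.num := by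
    have : (α.den : ℚ) * K = b * P - α.num := by
      rw [← hK, ← hP, ← Rat.mul_den_eq_num]
      ring
    exact_mod_cast this
  have hP1 : 1 ≤ P := by
    have : (0 : ℚ) < P := hP ▸ mul_pos ht (cangleRat_pos _)
    exact_mod_cast this
  have hcop : F.den.Coprime b := by
    have hFden : (F.den : ℤ) ∣ α.den := by
      have h := Rat.den_dvd P α.den
      rwa [← Rat.intCast_div_eq_divInt, ← hP, Int.cast_natCast,
        mul_div_cancel_left₀ _ ht.ne'] at h
    have htb : α.den.Coprime b := Nat.isCoprime_iff_coprime.mp ⟨-q, e, by linear_combination hq⟩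
    exact htb.coprime_dvd_left (Int.natCast_dvd_natCast.mp hFden)
  refine dwork_eq_of_coprime hcop ?_ ?_ hK
  · have := abs_lt.mp hnum
    nlinarith [α.den_pos]
  · rcases (cangleRat_le_one (e * α)).lt_or_eq with hF | hF
    · -- `F < 1` and `α.den * F ∈ ℤ` give `α.den * F ≤ α.den - 1`
      have hPt : P ≤ α.den - 1 := by
        have : (P : ℚ) < α.den := by rw [← hP]; nlinarith
        have : P < α.den := by exact_mod_cast this
        omega
      have := abs_lt.mp hnum
      nlinarith [α.den_pos]
    · have hαK : α = (b - K : ℤ) := by push_cast; rw [← hK, hF]; ring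
      have hpos : 0 < (b : ℤ) - K := by
        by_contra hle
        exact hα ⟨b - K, by omega, hαK⟩
      omega

section NumDen

theorem cOf_mul_div_cOf (p : ℤ × ℤ) (b : ℕ) : cOf p b * (b / cOf p b) = b :=
  Nat.mul_div_cancel' (Nat.gcd_dvd_right _ _)

variable {r s : ℤ} {b : ℕ}

theorem cOf_pos (hs : s ≠ 0) : 0 < cOf (r, s) b :=
  Nat.gcd_pos_of_pos_left _ (Int.gcd_pos_of_ne_zero_right r hs)

theorem exists_eq_mul_num_den (hs : s ≠ 0) :
    ∃ h : ℤ, r = h * ((r : ℚ) / s).num ∧ s = h * ((r : ℚ) / s).den ∧ (cOf (r, s) b : ℤ) ∣ h := by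
  obtain ⟨h, hr, hs'⟩ := Rat.num_den_mk hs (Rat.intCast_div_eq_divInt r s)
  refine ⟨h, hr, hs', Int.natCast_dvd.mpr ?_⟩
  have hgcd : Int.gcd r s = h.natAbs := by
    have hred := ((r : ℚ) / s).reduced
    generalize ((r : ℚ) / s).num = n, ((r : ℚ) / s).den = t at hr hs' hred
    rw [hr, hs', Int.gcd_mul_left, Int.gcd, Int.natAbs_natCast, hred, mul_one]
  exact hgcd ▸ Nat.gcd_dvd_left _ _

theorem den_mul_cOf_dvd (hs : s ≠ 0) : (((r : ℚ) / s).den * cOf (r, s) b : ℤ) ∣ s := by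
  obtain ⟨h, -, hs', hch⟩ := exists_eq_mul_num_den (r := r) (b := b) hs
  conv_rhs => rw [hs', mul_comm]
  exact mul_dvd_mul_left _ hch

theorem den_dvd_div_cOf_mul_sub_one {e : ℤ} (hs : s ≠ 0) (hes : s ∣ b * e - cOf (r, s) b) :
    (((r : ℚ) / s).den : ℤ) ∣ ((b / cOf (r, s) b : ℕ) : ℤ) * e - 1 := by
  have hc : (cOf (r, s) b : ℤ) ≠ 0 := by exact_mod_cast (cOf_pos hs).ne'
  have hb : (b : ℤ) = cOf (r, s) b * (b / cOf (r, s) b : ℕ) := by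
    exact_mod_cast (cOf_mul_div_cOf _ _).symm
  refine Int.dvd_of_mul_dvd_mul_right hc ((den_mul_cOf_dvd hs).trans (hes.trans ?_))
  exact ⟨1, by rw [hb]; ring⟩

theorem abs_num_lt_div_cOf (hs : s ≠ 0) (hrb : |r| < b) :
    |((r : ℚ) / s).num| < (b / cOf (r, s) b : ℕ) := by
  obtain ⟨h, hr, hs', hch⟩ := exists_eq_mul_num_den (r := r) (b := b) hs
  have hh : h ≠ 0 := by rintro rfl; exact hs (by simpa using hs')
  have hcle : (cOf (r, s) b : ℤ) ≤ |h| := Int.le_of_dvd (abs_pos.mpr hh) ((dvd_abs _ _).mpr hch)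
  have hb : (b : ℤ) = cOf (r, s) b * (b / cOf (r, s) b : ℕ) := by
    exact_mod_cast (cOf_mul_div_cOf _ _).symm
  have hc : (0 : ℤ) < cOf (r, s) b := by exact_mod_cast cOf_pos hs
  rw [hr, abs_mul, hb] at hrb
  nlinarith [abs_nonneg ((r : ℚ) / s).num]

end NumDen

section Jumps

/-- `(⟨e α⟩ + k)/c`: both `⟨Γ⟩` for the jump `Γ = jumpPt p b a e k` and
`γ - ⌊1 - α⌋/b` for the corresponding `γ` when `b e ≡ c (mod s)`. -/
def jumpVal (p : ℤ × ℤ) (b : ℕ) (e : ℤ) (k : ℕ) : ℚ :=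
  (cangleRat (e * ratOf p) + k) / cOf p b

variable {p : ℤ × ℤ} {b : ℕ} {e : ℤ} {k : ℕ}

theorem jumpPt_eq (a : ℤ) :
    jumpPt p b a e k = ((jumpVal p b e k - ⌊1 - a * ratOf p⌋ : ℚ) : ℝ) := by
  rw [jumpPt, jumpVal, cangle_ratCast]
  push_cast
  ring

theorem jumpVal_pos (hk : k < cOf p b) : 0 < jumpVal p b e k := by
  have hc : (0 : ℚ) < cOf p b := by exact_mod_cast (Nat.zero_le k).trans_lt hk
  exact div_pos (by positivity [cangleRat_pos (e * ratOf p)]) hc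

theorem jumpVal_le_one (hk : k < cOf p b) : jumpVal p b e k ≤ 1 := by
  have := cangleRat_le_one (e * ratOf p)
  have hk' : (k : ℚ) + 1 ≤ cOf p b := by exact_mod_cast hk
  rw [jumpVal, div_le_one (by linarith)]
  linarith

theorem cangle_jumpPt (a : ℤ) (hk : k < cOf p b) :
    cangle (jumpPt p b a e k) = jumpVal p b e k := by
  rw [jumpPt_eq, Rat.cast_sub, Rat.cast_intCast, cangle_sub_intCast]
  exact cangle_of_pos_of_le_one (by exact_mod_cast jumpVal_pos hk)
    (by exact_mod_cast jumpVal_le_one hk)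

variable {r s : ℤ}

theorem jumpVal_eq_dwork (hs : s ≠ 0) (hα : ¬ IsNonPosInt ((r : ℚ) / s)) (hrb : |r| < b)
    (hes : s ∣ b * e - cOf (r, s) b) :
    jumpVal (r, s) b e k = (dwork (b / cOf (r, s) b) ((r : ℚ) / s) + k) / cOf (r, s) b := by
  rw [dwork_eq_cangleRat (den_dvd_div_cOf_mul_sub_one hs hes) (abs_num_lt_div_cOf hs hrb) hα]
  rfl

theorem exists_mul_jumpVal_sub_eq (hs : s ≠ 0) (hes : s ∣ b * e - cOf (r, s) b) :
    ∃ m : ℤ, b * jumpVal (r, s) b e k - (r : ℚ) / s = m := by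
  obtain ⟨q, hq⟩ := den_dvd_div_cOf_mul_sub_one hs hes
  have hK := mul_cangleRat_mul_sub_eq hq
  have hc : (cOf (r, s) b : ℚ) ≠ 0 := by exact_mod_cast (cOf_pos hs).ne'
  have hb : (b : ℚ) = cOf (r, s) b * (b / cOf (r, s) b : ℕ) := by
    exact_mod_cast (cOf_mul_div_cOf _ _).symm
  generalize b / cOf (r, s) b = b' at hK hb
  refine ⟨q * ((r : ℚ) / s).num + b' * (⌊1 - e * ((r : ℚ) / s)⌋ + k), ?_⟩
  simp only [jumpVal, ratOf]
  rw [hb, mul_comm (cOf (r, s) b : ℚ), mul_assoc, mul_div_cancel₀ _ hc]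
  push_cast at hK ⊢
  linear_combination hK

theorem exists_mul_jumpVal_eq {d : ℕ} (hs : s ≠ 0) (hsd : s ∣ d) :
    ∃ W : ℤ, d * jumpVal (r, s) b e k = W := by
  obtain ⟨u, hu⟩ := (den_mul_cOf_dvd (b := b) hs).trans hsd
  have hP := den_mul_cangleRat_mul ((r : ℚ) / s) e
  have hc : (cOf (r, s) b : ℚ) ≠ 0 := by exact_mod_cast (cOf_pos hs).ne'
  have hu' : (d : ℚ) = ((r : ℚ) / s).den * u * cOf (r, s) b := by
    rw [mul_right_comm]; exact_mod_cast hu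
  refine ⟨(e * ((r : ℚ) / s).num + ((r : ℚ) / s).den * (⌊1 - e * ((r : ℚ) / s)⌋ + k)) * u, ?_⟩
  simp only [jumpVal, ratOf]
  rw [hu', mul_assoc, mul_div_cancel₀ _ hc]
  push_cast at hP ⊢
  linear_combination (u : ℚ) * hP

end Jumps

section Comparison

variable {K : Type*} [Field K] [LinearOrder K] [IsStrictOrderedRing K] [FloorRing K]

theorem floor_one_sub_mul_le_iff {x y : K} {m : ℤ} (hm : x - y = m) {a : ℤ} (ha : 0 < a) :
    ⌊1 - a * x⌋ ≤ ⌊1 - a * y⌋ ↔ y ≤ x := by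
  have hx : 1 - a * x = 1 - a * y - (a * m : ℤ) := by push_cast; linear_combination (-a : K) * hm
  rw [hx, Int.floor_sub_intCast, sub_le_self_iff, ← sub_nonneg (a := x), hm, Int.cast_nonneg_iff]
  exact ⟨fun h => nonneg_of_mul_nonneg_right h ha, mul_nonneg ha.le⟩

theorem eq_of_floor_one_sub_mul_eq {x y : K} {m : ℤ} (hm : x - y = m) {a : ℤ} (ha : 0 < a)
    (h : ⌊1 - a * x⌋ = ⌊1 - a * y⌋) : x = y :=
  le_antisymm
    ((floor_one_sub_mul_le_iff (m := -m) (by push_cast; linear_combination -hm) ha).mp h.ge)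
    ((floor_one_sub_mul_le_iff hm ha).mp h.le)

theorem exists_sub_eq_intCast_of_eq {b : ℕ} {G₁ G₂ α₁ α₂ : ℚ}
    (h₁ : ∃ m : ℤ, b * G₁ - α₁ = m) (h₂ : ∃ m : ℤ, b * G₂ - α₂ = m) (h : G₁ = G₂) :
    ∃ m : ℤ, α₁ - α₂ = m := by
  obtain ⟨m₁, hm₁⟩ := h₁
  obtain ⟨m₂, hm₂⟩ := h₂
  exact ⟨m₂ - m₁, by push_cast; linear_combination hm₂ - hm₁ + (b : ℚ) * h⟩

-- `d (G' - G)` is a positive integer, so `G' - G ≥ 1/d > (A - A')/b`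
theorem add_div_lt_add_div_of_lt {b d : ℕ} {G G' : ℚ} {A A' : ℤ} (hd : 0 < d)
    (hW : ∃ W : ℤ, d * G = W) (hW' : ∃ W : ℤ, d * G' = W) (hA : d * |A - A'| < b)
    (hlt : G < G') : G + A / b < G' + A' / b := by
  obtain ⟨W, hW⟩ := hW
  obtain ⟨W', hW'⟩ := hW'
  have hdq : (0 : ℚ) < d := by exact_mod_cast hd
  have hWW : W + 1 ≤ W' := by
    have : (W : ℚ) < W' := by rw [← hW, ← hW']; exact mul_lt_mul_of_pos_left hlt hdq
    exact_mod_cast this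
  have hAb : (d : ℚ) * (A - A') < b := by
    have : (d : ℤ) * (A - A') < b := lt_of_le_of_lt (by gcongr; exact le_abs_self _) hA
    exact_mod_cast this
  have hdG : 1 ≤ (d : ℚ) * (G' - G) := by
    rw [mul_sub, hW, hW']
    exact_mod_cast (le_sub_iff_add_le'.mpr hWW)
  have hb : (0 : ℚ) < b := by
    have : (0 : ℤ) < b := lt_of_le_of_lt (by positivity) hA
    exact_mod_cast this
  rw [← sub_pos, show G' + A' / b - (G + A / b) = ((b : ℚ) * (G' - G) - (A - A')) / b by
    field_simp; ring]
  refine div_pos ?_ hb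
  nlinarith

theorem add_floor_div_le_iff {b d : ℕ} {G₁ G₂ α₁ α₂ : ℚ} (hd : 0 < d)
    (hW₁ : ∃ W : ℤ, d * G₁ = W) (hW₂ : ∃ W : ℤ, d * G₂ = W)
    (hE₁ : ∃ m : ℤ, b * G₁ - α₁ = m) (hE₂ : ∃ m : ℤ, b * G₂ - α₂ = m)
    (hA : d * |⌊1 - α₁⌋ - ⌊1 - α₂⌋| < b) :
    G₁ + ⌊1 - α₁⌋ / b ≤ G₂ + ⌊1 - α₂⌋ / b ↔ G₁ < G₂ ∨ (G₁ = G₂ ∧ α₂ ≤ α₁) := by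
  rcases lt_trichotomy G₁ G₂ with h | h | h
  · exact iff_of_true (add_div_lt_add_div_of_lt hd hW₁ hW₂ hA h).le (Or.inl h)
  · obtain ⟨m, hm⟩ := exists_sub_eq_intCast_of_eq hE₁ hE₂ h
    have hb : (0 : ℚ) < b := by
      have : (0 : ℤ) < b := lt_of_le_of_lt (by positivity) hA
      exact_mod_cast this
    rw [h, add_le_add_iff_left, div_le_div_iff_of_pos_right hb, Int.cast_le]
    simpa [h] using floor_one_sub_mul_le_iff hm one_pos
  · refine iff_of_false (not_le.mpr (add_div_lt_add_div_of_lt hd hW₂ hW₁ ?_ h)) ?_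
    · rwa [abs_sub_comm]
    · rintro (h' | ⟨h', -⟩) <;> linarith

theorem cle_jumpPt_iff {p₁ p₂ : ℤ × ℤ} {b : ℕ} {a e₁ e₂ : ℤ} {k₁ k₂ : ℕ}
    (hk₁ : k₁ < cOf p₁ b) (hk₂ : k₂ < cOf p₂ b) :
    cle (jumpPt p₁ b a e₁ k₁) (jumpPt p₂ b a e₂ k₂) ↔
      jumpVal p₁ b e₁ k₁ < jumpVal p₂ b e₂ k₂ ∨ (jumpVal p₁ b e₁ k₁ = jumpVal p₂ b e₂ k₂ ∧
        ⌊1 - a * ratOf p₁⌋ ≤ ⌊1 - a * ratOf p₂⌋) := by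
  rw [cle, cangle_jumpPt a hk₁, cangle_jumpPt a hk₂, jumpPt_eq, jumpPt_eq, Rat.cast_lt,
    Rat.cast_inj, Rat.cast_le]
  refine or_congr Iff.rfl (and_congr_right fun h => ?_)
  rw [h, sub_le_sub_iff_left, Int.cast_le]

theorem jumpPt_eq_jumpPt_iff {p₁ p₂ : ℤ × ℤ} {b : ℕ} {a e₁ e₂ : ℤ} {k₁ k₂ : ℕ}
    (hk₁ : k₁ < cOf p₁ b) (hk₂ : k₂ < cOf p₂ b) :
    jumpPt p₁ b a e₁ k₁ = jumpPt p₂ b a e₂ k₂ ↔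
      jumpVal p₁ b e₁ k₁ = jumpVal p₂ b e₂ k₂ ∧ ⌊1 - a * ratOf p₁⌋ = ⌊1 - a * ratOf p₂⌋ := by
  refine ⟨fun h => ?_, fun ⟨hG, hfl⟩ => by rw [jumpPt_eq, jumpPt_eq, hG, hfl]⟩
  have hG : jumpVal p₁ b e₁ k₁ = jumpVal p₂ b e₂ k₂ := by
    simpa [cangle_jumpPt a hk₁, cangle_jumpPt a hk₂] using congrArg cangle h
  rw [jumpPt_eq, jumpPt_eq, hG, Rat.cast_inj, sub_right_inj, Int.cast_inj] at h
  exact ⟨hG, h⟩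

end Comparison

/-- Lemma 5.3: comparison of the orderings of the jumps. -/
theorem jumps_ordering (r₁ s₁ r₂ s₂ : ℤ) (hs₁ : s₁ ≠ 0) (hs₂ : s₂ ≠ 0)
    (hα₁ : ¬ IsNonPosInt ((r₁ : ℚ) / (s₁ : ℚ))) (hα₂ : ¬ IsNonPosInt ((r₂ : ℚ) / (s₂ : ℚ)))
    (b : ℕ)
    (hbig : max (max |r₁| |r₂|)
        ((Int.lcm s₁ s₂ : ℤ) * |⌊1 - (r₁ : ℚ) / (s₁ : ℚ)⌋ - ⌊1 - (r₂ : ℚ) / (s₂ : ℚ)⌋|)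
      < (b : ℤ))
    (e₁ e₂ : ℤ)
    (he₁ : 1 ≤ e₁ ∧ e₁ ≤ (Int.lcm s₁ s₂ : ℤ) ∧ s₁ ∣ ((b : ℤ) * e₁ - (cOf (r₁, s₁) b : ℤ)))
    (he₂ : 1 ≤ e₂ ∧ e₂ ≤ (Int.lcm s₁ s₂ : ℤ) ∧ s₂ ∣ ((b : ℤ) * e₂ - (cOf (r₂, s₂) b : ℤ)))
    (k₁ k₂ : ℕ) (hk₁ : k₁ < cOf (r₁, s₁) b) (hk₂ : k₂ < cOf (r₂, s₂) b)
    (a : ℤ) (ha : 0 < a) :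
    ((dwork (b / cOf (r₁, s₁) b) ((r₁ : ℚ) / (s₁ : ℚ)) + (k₁ : ℚ)) / (cOf (r₁, s₁) b : ℚ)
          + ((⌊1 - (r₁ : ℚ) / (s₁ : ℚ)⌋ : ℤ) : ℚ) / (b : ℚ) ≤
        (dwork (b / cOf (r₂, s₂) b) ((r₂ : ℚ) / (s₂ : ℚ)) + (k₂ : ℚ)) / (cOf (r₂, s₂) b : ℚ)
          + ((⌊1 - (r₂ : ℚ) / (s₂ : ℚ)⌋ : ℤ) : ℚ) / (b : ℚ) ↔
      cle (jumpPt (r₁, s₁) b a e₁ k₁) (jumpPt (r₂, s₂) b a e₂ k₂)) ∧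
    (jumpPt (r₁, s₁) b a e₁ k₁ = jumpPt (r₂, s₂) b a e₂ k₂ →
      (r₁ : ℚ) / (s₁ : ℚ) = (r₂ : ℚ) / (s₂ : ℚ)) := by
  obtain ⟨⟨hr₁, hr₂⟩, hA⟩ := max_lt_iff.mp hbig |>.imp_left max_lt_iff.mp
  have hE₁ := exists_mul_jumpVal_sub_eq (k := k₁) hs₁ he₁.2.2
  have hE₂ := exists_mul_jumpVal_sub_eq (k := k₂) hs₂ he₂.2.2
  rw [← jumpVal_eq_dwork hs₁ hα₁ hr₁ he₁.2.2, ← jumpVal_eq_dwork hs₂ hα₂ hr₂ he₂.2.2,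
    add_floor_div_le_iff (Int.lcm_pos hs₁ hs₂) (exists_mul_jumpVal_eq hs₁ (Int.dvd_lcm_left _ _))
      (exists_mul_jumpVal_eq hs₂ (Int.dvd_lcm_right _ _)) hE₁ hE₂ hA, cle_jumpPt_iff hk₁ hk₂]
  refine ⟨or_congr_right (and_congr_right fun hG => ?_), fun h => ?_⟩
  · obtain ⟨m, hm⟩ := exists_sub_eq_intCast_of_eq hE₁ hE₂ hG
    exact (floor_one_sub_mul_le_iff hm ha).symm
  · obtain ⟨hG, hfl⟩ := (jumpPt_eq_jumpPt_iff hk₁ hk₂).mp h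
    obtain ⟨m, hm⟩ := exists_sub_eq_intCast_of_eq hE₁ hE₂ hG
    exact eq_of_floor_one_sub_mul_eq hm ha hfl
end
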